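/- arXiv:2402.17582 — 12 statements merged into one kernel-verified Lean document; each statement's English description precedes it below -/
import Mathlib

section
/- Let E be a finite set, (Γ_x)_{x∈E} a family of finite groups, and H a subgroup of the product group G = ∏_{x∈E} Γ_x. For S ⊆ E let H_S denote the image of H under the projection π_S : G → ∏_{x∈S} Γ_x. Then for any real b > 1, the function r(S) = log_b |H_S| satisfies submodularity: for all S, T ⊆ E, r(S) + r(T) ≥ r(S ∪ T) + r(S ∩ T). Equivalently, |H_S| · |H_T| ≥ |H_{S∪T}| · |H_{S∩T}|. -/
/-!
Writing `K_S` for the kernel of `π_S`, the projection `H_S` is `H / (H ⊓ K_S)`, so `|H_S|` is the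
relative index of `K_S` in `H`. Now `K_{S∪T} = K_S ⊓ K_T` while `K_S` and `K_T` both lie in
`K_{S∩T}`, and relative indices are submodular in this situation: `H ⊓ K_S` modulo `H ⊓ K_S ⊓ K_T`
embeds into `H ⊓ K_{S∩T}` modulo `H ⊓ K_T`.
-/

/-- Coordinate projection of a product of groups onto the coordinates in `S`. -/
def proj {E : Type} (Γ : E → Type) [∀ x, Group (Γ x)] (S : Finset E) :
    (∀ x, Γ x) →* (∀ x : S, Γ x) :=
  Pi.monoidHom fun i => Pi.evalMonoidHom Γ i

namespace Subgroup

variable {G : Type*} [Group G]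

theorem relIndex_inf_mul_relIndex_le {A B C L : Subgroup G} (hAC : A ≤ C) (hBC : B ≤ C)
    (hB : B.relIndex L ≠ 0) :
    (A ⊓ B).relIndex L * C.relIndex L ≤ A.relIndex L * B.relIndex L := by
  have hB_split : B.relIndex (C ⊓ L) * C.relIndex L = B.relIndex L := by
    rw [relIndex_inf_mul_relIndex, inf_of_le_left hBC]
  have hB_mono : B.relIndex (A ⊓ L) ≤ B.relIndex (C ⊓ L) :=
    relIndex_le_of_le_right (inf_le_inf_right L hAC) (left_ne_zero_of_mul (hB_split ▸ hB))
  calc (A ⊓ B).relIndex L * C.relIndex L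
      = A.relIndex L * (B.relIndex (A ⊓ L) * C.relIndex L) := by
        rw [inf_comm, ← relIndex_inf_mul_relIndex]; ring
    _ ≤ A.relIndex L * (B.relIndex (C ⊓ L) * C.relIndex L) := by gcongr
    _ = A.relIndex L * B.relIndex L := by rw [hB_split]

end Subgroup

section proj

variable {E : Type} (Γ : E → Type) [∀ x, Group (Γ x)]

theorem mem_ker_proj {S : Finset E} {g : ∀ x, Γ x} :
    g ∈ (proj Γ S).ker ↔ ∀ x ∈ S, g x = 1 := by
  rw [MonoidHom.mem_ker, funext_iff]
  exact ⟨fun h x hx => h ⟨x, hx⟩, fun h x => h x x.2⟩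

theorem ker_proj_anti {S T : Finset E} (hST : S ⊆ T) : (proj Γ T).ker ≤ (proj Γ S).ker :=
  fun _ hg => (mem_ker_proj Γ).2 fun x hx => (mem_ker_proj Γ).1 hg x (hST hx)

theorem ker_proj_union [DecidableEq E] (S T : Finset E) :
    (proj Γ (S ∪ T)).ker = (proj Γ S).ker ⊓ (proj Γ T).ker := by
  ext g
  simp only [Subgroup.mem_inf, mem_ker_proj, Finset.mem_union]
  grind

theorem card_map_proj_union_mul_card_map_proj_inter_le [DecidableEq E]
    [∀ x, Finite (Γ x)] (H : Subgroup (∀ x, Γ x)) (S T : Finset E) :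
    Nat.card (H.map (proj Γ (S ∪ T))) * Nat.card (H.map (proj Γ (S ∩ T))) ≤
      Nat.card (H.map (proj Γ S)) * Nat.card (H.map (proj Γ T)) := by
  simp only [← Subgroup.relIndex_ker, ker_proj_union]
  refine Subgroup.relIndex_inf_mul_relIndex_le (ker_proj_anti Γ Finset.inter_subset_left)
    (ker_proj_anti Γ Finset.inter_subset_right) ?_
  rw [Subgroup.relIndex_ker]
  exact Nat.card_pos.ne'

end proj

theorem stmt0_general {E : Type} [DecidableEq E]
    (Γ : E → Type) [∀ x, Group (Γ x)] [∀ x, Fintype (Γ x)]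
    (H : Subgroup (∀ x, Γ x)) (b : ℝ) (hb : 1 < b)
    (r : Finset E → ℝ)
    (hr : ∀ S : Finset E, r S = Real.logb b (Nat.card (Subgroup.map (proj Γ S) H)))
    (S T : Finset E) :
    r (S ∪ T) + r (S ∩ T) ≤ r S + r T ∧
    Nat.card (Subgroup.map (proj Γ (S ∪ T)) H) *
        Nat.card (Subgroup.map (proj Γ (S ∩ T)) H) ≤
      Nat.card (Subgroup.map (proj Γ S) H) * Nat.card (Subgroup.map (proj Γ T) H) := by
  have hcard := card_map_proj_union_mul_card_map_proj_inter_le Γ H S T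
  refine ⟨?_, hcard⟩
  have hpos (W : Finset E) : (0 : ℝ) < Nat.card (H.map (proj Γ W)) := mod_cast Nat.card_pos
  simp only [hr]
  rw [← Real.logb_mul (hpos _).ne' (hpos _).ne', ← Real.logb_mul (hpos _).ne' (hpos _).ne']
  exact Real.logb_le_logb_of_le hb (mul_pos (hpos _) (hpos _)) (by exact_mod_cast hcard)

/-- For a subgroup `H` of a finite product of finite groups, the
function `r S = log_b |π_S(H)|` is submodular; equivalently
`|H_{S∪T}| * |H_{S∩T}| ≤ |H_S| * |H_T|`. -/
theorem stmt0 {E : Type} [Fintype E] [DecidableEq E]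
    (Γ : E → Type) [∀ x, Group (Γ x)] [∀ x, Fintype (Γ x)]
    (H : Subgroup (∀ x, Γ x)) (b : ℝ) (hb : 1 < b)
    (r : Finset E → ℝ)
    (hr : ∀ S : Finset E, r S = Real.logb b (Nat.card (Subgroup.map (proj Γ S) H)))
    (S T : Finset E) :
    r (S ∪ T) + r (S ∩ T) ≤ r S + r T ∧
    Nat.card (Subgroup.map (proj Γ (S ∪ T)) H) *
        Nat.card (Subgroup.map (proj Γ (S ∩ T)) H) ≤
      Nat.card (Subgroup.map (proj Γ S) H) * Nat.card (Subgroup.map (proj Γ T) H) :=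
  stmt0_general Γ H b hb r hr S T
end

section
/- Let H ≤ G = ∏_{x∈E} Γ_x. For S ⊆ E and x ∈ E \ S, the increment |H_{S∪{x}}| / |H_S| equals the cardinality of the kernel of the projection map π_S : H_{S∪{x}} → H_S; moreover this kernel size is weakly decreasing in S: if S ⊆ T with x ∉ T, then |ker(π_T : H_{T∪{x}} → H_T)| ≤ |ker(π_S : H_{S∪{x}} → H_S)| (law of diminishing returns). -/
/-- Restriction homomorphism from the product over `T` to the product over `S ⊆ T`. -/
def restr {E : Type} (Γ : E → Type) [∀ x, Group (Γ x)] {S T : Finset E} (h : S ⊆ T) :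
    (∀ x : T, Γ x) →* (∀ x : S, Γ x) :=
  Pi.monoidHom fun i => Pi.evalMonoidHom (fun x : T => Γ x) ⟨i.1, h i.2⟩

/-!
Both parts come from the formula `|K| = |f(K)| · |K ∩ ker f|`. Applied to `K = H_{S∪{x}}` and
the restriction to `S` it gives the first part. For the second, restricting from `T ∪ {x}` to
`S ∪ {x}` sends the kernel over `T` into the kernel over `S`, and is injective on it: an element
trivial on `T` and on `S ∪ {x}` is trivial on `T ∪ {x}`.
-/

theorem Subgroup.card_eq_card_map_mul_card_inf_ker {G G' : Type*} [Group G] [Group G']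
    (K : Subgroup G) (f : G →* G') :
    Nat.card K = Nat.card (K.map f) * Nat.card ↥(K ⊓ f.ker) := by
  rw [← relIndex_ker, ← relIndex_bot_left, ← relIndex_bot_left,
    ← relIndex_mul_relIndex ⊥ (K ⊓ f.ker) K bot_le inf_le_left, inf_comm, inf_relIndex_right,
    mul_comm]

theorem Subgroup.card_le_card_of_map_le_of_inf_ker_eq_bot {G G' : Type*} [Group G] [Group G']
    {K : Subgroup G} {L : Subgroup G'} [Finite L] (f : G →* G')
    (hmap : K.map f ≤ L) (hker : K ⊓ f.ker = ⊥) :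
    Nat.card K ≤ Nat.card L := by
  rw [K.card_eq_card_map_mul_card_inf_ker f, hker, Subgroup.card_bot, mul_one]
  exact Subgroup.card_le_of_le hmap

section Restriction

variable {E : Type} (Γ : E → Type) [∀ x, Group (Γ x)]

theorem restr_comp_proj {S T : Finset E} (h : S ⊆ T) :
    (restr Γ h).comp (proj Γ T) = proj Γ S :=
  rfl

theorem restr_comp_restr {S T U : Finset E} (hST : S ⊆ T) (hTU : T ⊆ U) :
    (restr Γ hST).comp (restr Γ hTU) = restr Γ (hST.trans hTU) :=
  rfl

theorem map_restr_map_proj {S T : Finset E} (h : S ⊆ T) (H : Subgroup (∀ x, Γ x)) :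
    (H.map (proj Γ T)).map (restr Γ h) = H.map (proj Γ S) := by
  rw [Subgroup.map_map, restr_comp_proj]

theorem mem_ker_restr {S T : Finset E} (h : S ⊆ T) {y : ∀ x : T, Γ x} :
    y ∈ (restr Γ h).ker ↔ ∀ i (hi : i ∈ S), y ⟨i, h hi⟩ = 1 :=
  MonoidHom.mem_ker.trans (funext_iff.trans Subtype.forall)

theorem map_ker_restr_le {S S' T T' : Finset E} (hSS' : S ⊆ S') (hTT' : T ⊆ T')
    (hS'T' : S' ⊆ T') (hST : S ⊆ T) :
    (restr Γ hTT').ker.map (restr Γ hS'T') ≤ (restr Γ hSS').ker := by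
  rintro _ ⟨y, hy, rfl⟩
  rw [SetLike.mem_coe, MonoidHom.mem_ker] at hy
  rw [MonoidHom.mem_ker, ← MonoidHom.comp_apply, restr_comp_restr, ← restr_comp_restr Γ hST hTT',
    MonoidHom.comp_apply, hy, map_one]

theorem ker_restr_inf_ker_restr_eq_bot [DecidableEq E] {S₁ S₂ U : Finset E} (h₁ : S₁ ⊆ U)
    (h₂ : S₂ ⊆ U) (hU : U ⊆ S₁ ∪ S₂) :
    (restr Γ h₁).ker ⊓ (restr Γ h₂).ker = ⊥ := by
  refine eq_bot_iff.mpr fun y hy => Subgroup.mem_bot.mpr (funext fun ⟨i, hi⟩ => ?_)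
  obtain ⟨hy₁, hy₂⟩ := Subgroup.mem_inf.mp hy
  rw [mem_ker_restr] at hy₁ hy₂
  rcases Finset.mem_union.mp (hU hi) with hi₁ | hi₂
  exacts [hy₁ i hi₁, hy₂ i hi₂]

end Restriction

theorem stmt2_general {E : Type} [DecidableEq E]
    (Γ : E → Type) [∀ x, Group (Γ x)] [∀ x, Fintype (Γ x)]
    (H : Subgroup (∀ x, Γ x)) (x : E) (S T : Finset E)
    (hST : S ⊆ T) :
    Nat.card (Subgroup.map (proj Γ (insert x S)) H) =
      Nat.card (Subgroup.map (proj Γ S) H) *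
        Nat.card ↥(Subgroup.map (proj Γ (insert x S)) H ⊓
          (restr Γ (Finset.subset_insert x S)).ker) ∧
    Nat.card ↥(Subgroup.map (proj Γ (insert x T)) H ⊓
        (restr Γ (Finset.subset_insert x T)).ker) ≤
      Nat.card ↥(Subgroup.map (proj Γ (insert x S)) H ⊓
        (restr Γ (Finset.subset_insert x S)).ker) := by
  refine ⟨?_, ?_⟩
  · rw [Subgroup.card_eq_card_map_mul_card_inf_ker _ (restr Γ (Finset.subset_insert x S)),
      map_restr_map_proj]
  · have hsub : insert x S ⊆ insert x T := Finset.insert_subset_insert x hST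
    refine Subgroup.card_le_card_of_map_le_of_inf_ker_eq_bot (restr Γ hsub) ?_ ?_
    · refine (Subgroup.map_inf_le _ _ _).trans (inf_le_inf ?_ ?_)
      · rw [map_restr_map_proj]
      · exact map_ker_restr_le Γ _ _ hsub hST
    · refine eq_bot_mono (inf_le_inf_right _ inf_le_right) ?_
      refine ker_restr_inf_ker_restr_eq_bot Γ _ _ fun i hi => ?_
      rcases Finset.mem_insert.mp hi with rfl | hiT
      exacts [Finset.mem_union_right _ (Finset.mem_insert_self i S), Finset.mem_union_left _ hiT]

/-- the increment `|H_{S∪{x}}|/|H_S|` equals the size of the kernel of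
`π_S : H_{S∪{x}} → H_S`, and this kernel size is weakly decreasing in `S`
(law of diminishing returns). -/
theorem stmt2 {E : Type} [Fintype E] [DecidableEq E]
    (Γ : E → Type) [∀ x, Group (Γ x)] [∀ x, Fintype (Γ x)]
    (H : Subgroup (∀ x, Γ x)) (x : E) (S T : Finset E)
    (hST : S ⊆ T) (hxT : x ∉ T) :
    Nat.card (Subgroup.map (proj Γ (insert x S)) H) =
      Nat.card (Subgroup.map (proj Γ S) H) *
        Nat.card ↥(Subgroup.map (proj Γ (insert x S)) H ⊓
          (restr Γ (Finset.subset_insert x S)).ker) ∧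
    Nat.card ↥(Subgroup.map (proj Γ (insert x T)) H ⊓
        (restr Γ (Finset.subset_insert x T)).ker) ≤
      Nat.card ↥(Subgroup.map (proj Γ (insert x S)) H ⊓
        (restr Γ (Finset.subset_insert x S)).ker) :=
  stmt2_general Γ H x S T hST
end

section
/- Let Γ be a nonabelian finite group. Then there is no subgroup H of Γ × Γ × Γ such that the projections satisfy: π_{{x,y}}(H) = Γ × Γ for each pair {x,y} of the three coordinates, and |H| = |Γ|². (Equivalently, the uniform matroid U_{2,3} is not representable over any nonabelian group Γ.) -/
/-- if `Γ` is a nonabelian finite group then there is no subgroup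
`H ≤ Γ³` all of whose two-coordinate projections are everything and with
`|H| = |Γ|²`; i.e. `U_{2,3}` is not representable over a nonabelian group. -/
theorem stmt4 (Γ : Type) [Group Γ] [Fintype Γ]
    (hΓ : ∃ a b : Γ, a * b ≠ b * a) :
    ¬ ∃ H : Subgroup (Fin 3 → Γ),
        (∀ i j : Fin 3, i ≠ j →
          Subgroup.map
            ((Pi.evalMonoidHom (fun _ : Fin 3 => Γ) i).prod
              (Pi.evalMonoidHom (fun _ : Fin 3 => Γ) j)) H = ⊤) ∧
        Nat.card H = Nat.card Γ ^ 2 := by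
  rintro ⟨H, hproj, hcard⟩
  obtain ⟨a, b, hab⟩ := hΓ
  apply hab
  set p01 : (Fin 3 → Γ) →* Γ × Γ :=
    (Pi.evalMonoidHom (fun _ : Fin 3 => Γ) 0).prod
      (Pi.evalMonoidHom (fun _ : Fin 3 => Γ) 1) with hp01
  have hsurj : Function.Surjective (p01.comp H.subtype) := by
    rw [← MonoidHom.range_eq_top, MonoidHom.range_comp,
      Subgroup.range_subtype]
    exact hproj 0 1 (by decide)
  have hinj : Function.Injective (p01.comp H.subtype) := by
    have hb : Function.Bijective (p01.comp H.subtype) :=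
      (Nat.bijective_iff_surjective_and_card _).mpr
        ⟨hsurj, by rw [hcard, Nat.card_prod]; ring⟩
    exact hb.injective
  obtain ⟨gx, hgxH, hgx1, hgx2⟩ : ∃ g ∈ H, g 1 = 1 ∧ g 2 = a := by
    have h12 := hproj 1 2 (by decide)
    have hm : ((1 : Γ), a) ∈ Subgroup.map
        ((Pi.evalMonoidHom (fun _ : Fin 3 => Γ) 1).prod
          (Pi.evalMonoidHom (fun _ : Fin 3 => Γ) 2)) H := by
      rw [h12]; trivial
    obtain ⟨g, hg, hge⟩ := hm
    exact ⟨g, hg, congrArg Prod.fst hge, congrArg Prod.snd hge⟩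
  obtain ⟨gy, hgyH, hgy0, hgy2⟩ : ∃ g ∈ H, g 0 = 1 ∧ g 2 = b := by
    have h02 := hproj 0 2 (by decide)
    have hm : ((1 : Γ), b) ∈ Subgroup.map
        ((Pi.evalMonoidHom (fun _ : Fin 3 => Γ) 0).prod
          (Pi.evalMonoidHom (fun _ : Fin 3 => Γ) 2)) H := by
      rw [h02]; trivial
    obtain ⟨g, hg, hge⟩ := hm
    exact ⟨g, hg, congrArg Prod.fst hge, congrArg Prod.snd hge⟩
  have key : (⟨gx, hgxH⟩ * ⟨gy, hgyH⟩ : H) = ⟨gy, hgyH⟩ * ⟨gx, hgxH⟩ := by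
    apply hinj
    simp only [MonoidHom.comp_apply, Subgroup.coe_subtype, hp01,
      MonoidHom.prod_apply, Pi.evalMonoidHom_apply, MulMemClass.coe_mul,
      Pi.mul_apply, Prod.mk.injEq, hgx1, hgy0, mul_one, one_mul]

  have := congrArg (fun z : H => (z : Fin 3 → Γ) 2) key
  simpa [Pi.mul_apply, hgx2, hgy2] using this
end

section
/- Let H ≤ G = ∏_{x∈E} Γ_x realize the polymatroid P(H) with rank r(S) = log_b |H_S|. For h ∈ H let I(h) = {x ∈ E : h_x = 1}. If h ∈ H, then I(h) is a flat of P(H), i.e., for every x ∉ I(h), r(I(h) ∪ {x}) > r(I(h)). Equivalently, |H_{I(h)∪{x}}| > |H_{I(h)}| for every x ∉ I(h). -/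
/-- for `h ∈ H`, the set `I(h) = {x : h x = 1}` is a flat of the
polymatroid `P(H)`: adding any `x ∉ I(h)` strictly increases the rank, i.e.
`|H_{I(h) ∪ {x}}| > |H_{I(h)}|`. -/
theorem stmt5 {E : Type} [Fintype E] [DecidableEq E]
    (Γ : E → Type) [∀ x, Group (Γ x)] [∀ x, Fintype (Γ x)] [∀ x, DecidableEq (Γ x)]
    (H : Subgroup (∀ x, Γ x)) (b : ℝ) (hb : 1 < b)
    (r : Finset E → ℝ)
    (hr : ∀ S : Finset E, r S = Real.logb b (Nat.card (Subgroup.map (proj Γ S) H)))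
    (h : ∀ x, Γ x) (hh : h ∈ H)
    (I : Finset E) (hI : I = Finset.univ.filter fun x => h x = 1) :
    ∀ x ∉ I,
      Nat.card (Subgroup.map (proj Γ I) H) <
        Nat.card (Subgroup.map (proj Γ (insert x I)) H) ∧
      r I < r (insert x I) := by
  intro x hx
  have hhx : h x ≠ 1 := by
    intro hx1
    apply hx
    rw [hI]
    simp [hx1]
  have hhi : ∀ i ∈ I, h i = 1 := by
    intro i hi
    rw [hI] at hi
    simpa using hi
  set J : Finset E := insert x I with hJ
  set K := Subgroup.map (proj Γ J) H with hK
  set L := Subgroup.map (proj Γ I) H with hL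
  let π : (∀ i : J, Γ i) →* (∀ i : I, Γ i) :=
    Pi.monoidHom fun i =>
      Pi.evalMonoidHom (fun j : J => Γ j) ⟨i.1, Finset.mem_insert_of_mem i.2⟩
  have hcomp : (proj Γ I) = π.comp (proj Γ J) := rfl
  have hmapπ : ∀ k ∈ K, π k ∈ L := by
    rintro k ⟨g, hg, rfl⟩
    exact ⟨g, hg, rfl⟩
  let f : K → L := fun k => ⟨π k, hmapπ k k.2⟩
  have hsurj : Function.Surjective f := by
    rintro ⟨l, g, hg, rfl⟩
    exact ⟨⟨proj Γ J g, ⟨g, hg, rfl⟩⟩, rfl⟩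
  have hninj : ¬ Function.Injective f := by
    intro hinj
    have h1 : proj Γ J h ∈ K := ⟨h, hh, rfl⟩
    have key : f ⟨proj Γ J h, h1⟩ = f ⟨1, one_mem K⟩ := by
      apply Subtype.ext
      funext i
      show h i.1 = 1
      exact hhi i.1 i.2
    have := hinj key
    have h2 : proj Γ J h = 1 := by
      simpa using congrArg Subtype.val this
    have h3 : h x = 1 := congrFun h2 ⟨x, Finset.mem_insert_self x I⟩
    exact hhx h3
  letI : Fintype K := Fintype.ofFinite _
  letI : Fintype L := Fintype.ofFinite _
  have hcard : Nat.card L < Nat.card K := by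
    rw [Nat.card_eq_fintype_card, Nat.card_eq_fintype_card]
    exact Fintype.card_lt_of_surjective_not_injective f hsurj hninj
  refine ⟨hcard, ?_⟩
  rw [hr, hr]
  have hpos : 0 < Nat.card L := Nat.card_pos
  exact Real.logb_lt_logb hb (by exact_mod_cast hpos) (by exact_mod_cast hcard)
end

section
/- Let H ≤ G = ∏_{x∈E} Γ_x and let S be a flat of the polymatroid P(H). Then there exist elements h_1, …, h_l ∈ H with l ≤ |E \ S| such that S = ⋂_{i=1}^l I(h_i), where I(h) = {x ∈ E : h_x = 1}. -/
lemma key {E : Type} [Fintype E] [DecidableEq E]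
    (Γ : E → Type) [∀ x, Group (Γ x)] [∀ x, Fintype (Γ x)] [∀ x, DecidableEq (Γ x)]
    (H : Subgroup (∀ x, Γ x)) (S : Finset E) (x : E) (hx : x ∉ S)
    (hlt : Nat.card (Subgroup.map (proj Γ S) H) <
        Nat.card (Subgroup.map (proj Γ (insert x S)) H)) :
    ∃ h ∈ H, (∀ y ∈ S, h y = 1) ∧ h x ≠ 1 := by
  by_contra hcon
  push_neg at hcon
  -- build restriction map
  set ψ : (∀ y : (insert x S : Finset E), Γ y) →* (∀ y : S, Γ y) :=
    Pi.monoidHom (fun i : S => Pi.evalMonoidHom (fun y : (insert x S : Finset E) => Γ y)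
      ⟨i.1, Finset.mem_insert_of_mem i.2⟩) with hψ
  have hcomp : ∀ h : (∀ y, Γ y), ψ (proj Γ (insert x S) h) = proj Γ S h := fun h => rfl
  -- ψ maps P' into P_S injectively
  set P' := Subgroup.map (proj Γ (insert x S)) H
  set PS := Subgroup.map (proj Γ S) H
  have hmem : ∀ a : P', ψ a ∈ PS := by
    rintro ⟨a, h, hh, rfl⟩
    exact ⟨h, hh, (hcomp h)⟩
  have hinj : Function.Injective (fun a : P' => (⟨ψ a, hmem a⟩ : PS)) := by
    intro a b hab
    have h1 : ψ (a.1 * b.1⁻¹) = 1 := by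
      have : ψ a.1 = ψ b.1 := congrArg Subtype.val hab
      simp [map_mul, map_inv, this]
    obtain ⟨h, hh, hha⟩ := Subgroup.mul_mem P' a.2 (Subgroup.inv_mem P' b.2)
    have hS : ∀ y ∈ S, h y = 1 := by
      intro y hy
      have := congrFun h1 ⟨y, hy⟩
      rw [← hha] at this
      exact this
    have hx1 : h x = 1 := hcon h hh hS
    have : a.1 * b.1⁻¹ = 1 := by
      rw [← hha]
      funext i
      rcases Finset.mem_insert.mp i.2 with h' | h'
      · show h i.1 = 1; rw [show i.1 = x from h']; exact hx1
      · exact hS i.1 h'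
    have := eq_of_mul_inv_eq_one (a := a.1) (b := b.1) this
    exact Subtype.ext this
  have : Nat.card P' ≤ Nat.card PS := Nat.card_le_card_of_injective _ hinj
  omega

/-- every flat `S` of `P(H)` is the intersection of at most
`|E \\ S|` sets of the form `I(h) = {x : h x = 1}` with `h ∈ H`. -/
theorem stmt6 {E : Type} [Fintype E] [DecidableEq E]
    (Γ : E → Type) [∀ x, Group (Γ x)] [∀ x, Fintype (Γ x)] [∀ x, DecidableEq (Γ x)]
    (H : Subgroup (∀ x, Γ x)) (S : Finset E)
    (hflat : ∀ x ∉ S,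
      Nat.card (Subgroup.map (proj Γ S) H) <
        Nat.card (Subgroup.map (proj Γ (insert x S)) H)) :
    ∃ (l : ℕ) (hs : Fin l → ∀ x, Γ x),
      l ≤ (Finset.univ \ S).card ∧ (∀ i, hs i ∈ H) ∧
      S = Finset.univ.filter fun x => ∀ i, hs i x = 1 := by
  set T := Finset.univ \ S with hT
  have hkey : ∀ i : T, ∃ h, h ∈ H ∧ (∀ y ∈ S, h y = 1) ∧ h i.1 ≠ 1 := by
    intro i
    have hi : i.1 ∉ S := (Finset.mem_sdiff.mp i.2).2
    obtain ⟨h, hh, h1, h2⟩ := key Γ H S i.1 hi (hflat i.1 hi)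
    exact ⟨h, hh, h1, h2⟩
  choose f hf1 hf2 hf3 using hkey
  have e : Fin T.card ≃ T := T.equivFin.symm
  refine ⟨T.card, fun i => f (e i), le_refl _, fun i => hf1 _, ?_⟩
  ext x
  simp only [Finset.mem_filter, Finset.mem_univ, true_and]
  constructor
  · intro hx i
    exact hf2 (e i) x hx
  · intro hall
    by_contra hx
    have hxT : x ∈ T := Finset.mem_sdiff.mpr ⟨Finset.mem_univ x, hx⟩
    have := hall (e.symm ⟨x, hxT⟩)
    rw [e.apply_symm_apply] at this
    exact hf3 ⟨x, hxT⟩ this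
end

section
/- (Crapo–Rota critical theorem for finite groups.) Let H ≤ G = ∏_{x∈E} Γ_x, fix b > 1, and let χ_P(t) = Σ_{S⊆E} (−1)^{|S|} t^{r(E)−r(S)} where r(S) = log_b |H_S|. Then for every positive integer k, χ_P(b^k) equals the number of k-tuples (h_1, …, h_k) ∈ H^k such that ⋂_{j=1}^k I(h_j) = ∅, where I(h) = {x ∈ E : h_x = 1}. -/
section helpers
variable {E : Type} [Fintype E] [DecidableEq E]
    (Γ : E → Type) [∀ x, Group (Γ x)] [∀ x, Fintype (Γ x)]
    (H : Subgroup (∀ x, Γ x))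

lemma card_factor (T : Finset E) :
    Nat.card H =
      Nat.card {g : ∀ x, Γ x // g ∈ H ∧ ∀ x ∈ T, g x = 1} *
        Nat.card (Subgroup.map (proj Γ T) H) := by
  classical
  set f := (proj Γ T).comp H.subtype with hf
  have hrange : f.range = Subgroup.map (proj Γ T) H := by
    rw [hf, MonoidHom.range_comp, Subgroup.range_subtype]
  have hker : Nat.card f.ker = Nat.card {g : ∀ x, Γ x // g ∈ H ∧ ∀ x ∈ T, g x = 1} := by
    apply Nat.card_congr
    refine ⟨fun a => ⟨a.1.1, a.1.2, fun x hx => ?_⟩,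
            fun g => ⟨⟨g.1, g.2.1⟩, ?_⟩, fun a => rfl, fun g => rfl⟩
    · have := a.2
      rw [MonoidHom.mem_ker] at this
      exact congrFun this ⟨x, hx⟩
    · rw [MonoidHom.mem_ker]
      funext x
      exact g.2.2 x.1 x.2
  calc Nat.card H
      = Nat.card (H ⧸ f.ker) * Nat.card f.ker :=
        Subgroup.card_eq_card_quotient_mul_card_subgroup f.ker
    _ = Nat.card f.range * Nat.card f.ker := by
        rw [Nat.card_congr (QuotientGroup.quotientKerEquivRange f).toEquiv]
    _ = _ := by rw [hrange, hker, mul_comm]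

lemma card_map_univ :
    Nat.card (Subgroup.map (proj Γ (Finset.univ : Finset E)) H) = Nat.card H := by
  have hinj : Function.Injective (proj Γ (Finset.univ : Finset E)) := by
    intro g g' h
    funext x
    exact congrFun h ⟨x, Finset.mem_univ x⟩
  exact (Nat.card_congr (H.equivMapOfInjective _ hinj).toEquiv).symm

end helpers

lemma sum_pow_neg_one_real {α : Type*} [DecidableEq α] (x : Finset α) :
    ∑ m ∈ x.powerset, (-1 : ℝ) ^ m.card = if x = ∅ then 1 else 0 := by
  have h : ∑ m ∈ x.powerset, (-1 : ℝ) ^ m.card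
      = ((∑ m ∈ x.powerset, (-1 : ℤ) ^ m.card : ℤ) : ℝ) := by push_cast; rfl
  rw [h, Finset.sum_powerset_neg_one_pow_card]
  split <;> simp

/-- Crapo–Rota critical theorem for finite groups:
`χ_P(b^k)` equals the number of `k`-tuples of elements of `H` whose sets
`I(h_j) = {x : h_j x = 1}` have empty intersection. -/
theorem stmt7 {E : Type} [Fintype E] [DecidableEq E]
    (Γ : E → Type) [∀ x, Group (Γ x)] [∀ x, Fintype (Γ x)]
    (H : Subgroup (∀ x, Γ x)) (b : ℝ) (hb : 1 < b) (k : ℕ) (hk : 0 < k)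
    (r : Finset E → ℝ)
    (hr : ∀ S : Finset E, r S = Real.logb b (Nat.card (Subgroup.map (proj Γ S) H))) :
    ∑ S ∈ Finset.univ.powerset, (-1 : ℝ) ^ S.card * (b ^ k) ^ (r Finset.univ - r S) =
      Nat.card {t : Fin k → ∀ x, Γ x // (∀ i, t i ∈ H) ∧ ∀ x : E, ∃ i, t i x ≠ 1} := by
  classical
  have hb0 : (0 : ℝ) < b := lt_trans one_pos hb
  set m : Finset E → ℕ :=
    fun T => Nat.card {g : ∀ x, Γ x // g ∈ H ∧ ∀ x ∈ T, g x = 1} with hm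
  have hcpos : ∀ S : Finset E, 0 < Nat.card (Subgroup.map (proj Γ S) H) :=
    fun S => Nat.card_pos
  -- Step A : each summand becomes (m S)^k
  have stepA : ∀ S : Finset E,
      ((b ^ k : ℝ)) ^ (r Finset.univ - r S) = ((m S : ℝ)) ^ k := by
    intro S
    have h1 : ((b : ℝ) ^ k) ^ (r Finset.univ - r S)
        = ((b : ℝ) ^ (r Finset.univ - r S)) ^ k := by
      rw [← Real.rpow_natCast b k, ← Real.rpow_mul hb0.le, mul_comm,
        Real.rpow_mul hb0.le, Real.rpow_natCast]
    rw [h1]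
    congr 1
    have hS : (b : ℝ) ^ (r S) = (Nat.card (Subgroup.map (proj Γ S) H) : ℝ) := by
      rw [hr S, Real.rpow_logb hb0 (ne_of_gt hb) (by exact_mod_cast hcpos S)]
    have hU : (b : ℝ) ^ (r Finset.univ) = (Nat.card H : ℝ) := by
      rw [hr Finset.univ,
        Real.rpow_logb hb0 (ne_of_gt hb) (by exact_mod_cast hcpos Finset.univ),
        card_map_univ]
    rw [Real.rpow_sub hb0, hS, hU, card_factor Γ H S]
    push_cast
    rw [mul_div_assoc, div_self (by exact_mod_cast (hcpos S).ne'), mul_one]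
  -- counting side
  set Z : (Fin k → ∀ x, Γ x) → Finset E :=
    fun t => Finset.univ.filter fun x => ∀ i, t i x = 1 with hZ
  set A : Finset (Fin k → ∀ x, Γ x) :=
    Finset.univ.filter fun t => ∀ i, t i ∈ H with hA
  have hN : ∀ S : Finset E,
      ((Finset.univ.filter fun t : Fin k → ∀ x, Γ x =>
        (∀ i, t i ∈ H) ∧ ∀ x ∈ S, ∀ i, t i x = 1).card) = (m S) ^ k := by
    intro S
    rw [← Fintype.card_subtype]
    have e1 : {t : Fin k → ∀ x, Γ x //
        (∀ i, t i ∈ H) ∧ ∀ x ∈ S, ∀ i, t i x = 1} ≃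
        {t : Fin k → ∀ x, Γ x // ∀ i, t i ∈ H ∧ ∀ x ∈ S, t i x = 1} := by
      apply Equiv.subtypeEquivRight
      intro t
      constructor
      · rintro ⟨h1, h2⟩ i; exact ⟨h1 i, fun x hx => h2 x hx i⟩
      · intro h; exact ⟨fun i => (h i).1, fun x hx i => (h i).2 x hx⟩
    rw [Fintype.card_congr (e1.trans (Equiv.subtypePiEquivPi
      (p := fun (_ : Fin k) (g : ∀ x, Γ x) => g ∈ H ∧ ∀ x ∈ S, g x = 1))),
      Fintype.card_pi]
    simp [hm, Nat.card_eq_fintype_card]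
  have stepB :
      ∑ S ∈ Finset.univ.powerset, (-1 : ℝ) ^ S.card * ((m S : ℝ)) ^ k =
      ((Finset.univ.filter fun t : Fin k → ∀ x, Γ x =>
        (∀ i, t i ∈ H) ∧ ∀ x : E, ∃ i, t i x ≠ 1).card : ℝ) := by
    have key : ∀ S : Finset E,
        ((m S : ℝ)) ^ k = ∑ t ∈ A, (if S ⊆ Z t then (1 : ℝ) else 0) := by
      intro S
      have := hN S
      have hfe : (Finset.univ.filter fun t : Fin k → ∀ x, Γ x =>
          (∀ i, t i ∈ H) ∧ ∀ x ∈ S, ∀ i, t i x = 1) = A.filter fun t => S ⊆ Z t := by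
        rw [hA, Finset.filter_filter]
        apply Finset.filter_congr
        intro t _
        simp only [hZ, Finset.subset_iff, Finset.mem_filter, Finset.mem_univ, true_and]
      calc ((m S : ℝ)) ^ k = ((Finset.univ.filter fun t : Fin k → ∀ x, Γ x =>
            (∀ i, t i ∈ H) ∧ ∀ x ∈ S, ∀ i, t i x = 1).card : ℝ) := by
              rw [this]; push_cast; ring
        _ = ((A.filter fun t => S ⊆ Z t).card : ℝ) := by rw [hfe]
        _ = _ := by rw [Finset.natCast_card_filter]
    calc ∑ S ∈ Finset.univ.powerset, (-1 : ℝ) ^ S.card * ((m S : ℝ)) ^ k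
        = ∑ S ∈ Finset.univ.powerset, ∑ t ∈ A,
            (-1 : ℝ) ^ S.card * (if S ⊆ Z t then (1 : ℝ) else 0) := by
          refine Finset.sum_congr rfl fun S _ => ?_
          rw [key S, Finset.mul_sum]
      _ = ∑ t ∈ A, ∑ S ∈ Finset.univ.powerset,
            (-1 : ℝ) ^ S.card * (if S ⊆ Z t then (1 : ℝ) else 0) :=
          Finset.sum_comm
      _ = ∑ t ∈ A, (if Z t = ∅ then (1 : ℝ) else 0) := by
          refine Finset.sum_congr rfl fun t _ => ?_
          simp only [mul_ite, mul_one, mul_zero]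
          rw [← Finset.sum_filter]
          have hps : (Finset.univ.powerset.filter fun S => S ⊆ Z t) = (Z t).powerset := by
            ext S
            simp [Finset.mem_powerset, Finset.subset_univ]
          rw [hps, sum_pow_neg_one_real]
      _ = ((A.filter fun t => Z t = ∅).card : ℝ) := by
          rw [Finset.natCast_card_filter]
      _ = _ := by
          congr 1
          rw [hA, Finset.filter_filter]
          congr 1
          apply Finset.filter_congr
          intro t _
          simp only [hZ, Finset.filter_eq_empty_iff, Finset.mem_univ, true_implies,
            not_forall, and_congr_right_iff]
  rw [Finset.sum_congr rfl fun S _ => by rw [stepA S], stepB,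
    Nat.card_eq_fintype_card, Fintype.card_subtype]
end

section
/- Let P = (E, r) be an α-polymatroid for α ∈ ℝ_{≥0}^E (i.e., r({x}) ≤ α_x for all x). Define r^{*α}(S) = r(E \ S) + Σ_{x∈S} α_x − r(E). Then (E, r^{*α}) is a polymatroid, r^{*α}(E) = |α| − r(E), and (P^{*α})^{*α} = P. Furthermore, for S ⊆ E, deletion and contraction exchange under duality: (P^{*α} \ S)^{*α} = P/S and (P^{*α}/S)^{*α} = P \ S. -/
/-- for an `α`-polymatroid `(E, r)`, the `α`-dual rank
`r*(S) = r(E \ S) + Σ_{x∈S} α_x − r(E)` again defines a polymatroid, with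
`r*(E) = |α| − r(E)`, duality is an involution, and deletion and contraction
are exchanged under duality. -/
theorem stmt9 {E : Type} [Fintype E] [DecidableEq E]
    (r : Finset E → ℝ) (α : E → ℝ) (hα : ∀ x, 0 ≤ α x)
    (h0 : r ∅ = 0)
    (hmono : ∀ S T : Finset E, S ⊆ T → r S ≤ r T)
    (hsub : ∀ S T : Finset E, r (S ∪ T) + r (S ∩ T) ≤ r S + r T)
    (hcard : ∀ x : E, r {x} ≤ α x)
    (rd : Finset E → ℝ)
    (hrd : ∀ S : Finset E,
      rd S = r (Finset.univ \ S) + (∑ x ∈ S, α x) - r Finset.univ) :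
    -- (E, r*) is a polymatroid
    (rd ∅ = 0 ∧ (∀ S : Finset E, 0 ≤ rd S) ∧
      (∀ S T : Finset E, S ⊆ T → rd S ≤ rd T) ∧
      (∀ S T : Finset E, rd (S ∪ T) + rd (S ∩ T) ≤ rd S + rd T)) ∧
    -- r*(E) = |α| - r(E)
    rd Finset.univ = (∑ x : E, α x) - r Finset.univ ∧
    -- (P*)* = P
    (∀ S : Finset E,
      rd (Finset.univ \ S) + (∑ x ∈ S, α x) - rd Finset.univ = r S) ∧
    -- (P* \ S)* = P / S
    (∀ S T : Finset E, T ⊆ Finset.univ \ S →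
      rd ((Finset.univ \ S) \ T) + (∑ x ∈ T, α x) - rd (Finset.univ \ S) =
        r (S ∪ T) - r S) ∧
    -- (P* / S)* = P \ S
    (∀ S T : Finset E, T ⊆ Finset.univ \ S →
      (rd (S ∪ ((Finset.univ \ S) \ T)) - rd S) + (∑ x ∈ T, α x) -
          (rd Finset.univ - rd S) = r T) := by
  have hnn : ∀ S : Finset E, 0 ≤ r S := fun S => h0 ▸ hmono ∅ S (Finset.empty_subset S)
  have key : ∀ (B A : Finset E), r (A ∪ B) ≤ r A + ∑ x ∈ B, α x := by
    intro B
    induction B using Finset.induction with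
    | empty => intro A; simp
    | @insert b B hb ih =>
      intro A
      have h1 := hsub (A ∪ B) {b}
      have h2 := hnn ((A ∪ B) ∩ {b})
      have h3 := hcard b
      have h4 := ih A
      have he : A ∪ insert b B = (A ∪ B) ∪ {b} := by
        ext x; simp only [Finset.mem_union, Finset.mem_insert, Finset.mem_singleton]; tauto
      rw [he, Finset.sum_insert hb]
      linarith
  have hrd0 : rd ∅ = 0 := by simp [hrd]
  have hmono' : ∀ S T : Finset E, S ⊆ T → rd S ≤ rd T := by
    intro S T hST
    rw [hrd S, hrd T]
    have hU : Finset.univ \ S = (Finset.univ \ T) ∪ (T \ S) := by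
      ext x
      have hx : x ∈ S → x ∈ T := fun h => hST h
      simp only [Finset.mem_sdiff, Finset.mem_union, Finset.mem_univ, true_and]
      tauto
    have hk := key (T \ S) (Finset.univ \ T)
    rw [← hU] at hk
    have hsum : ∑ x ∈ T \ S, α x + ∑ x ∈ S, α x = ∑ x ∈ T, α x := Finset.sum_sdiff hST
    linarith
  have hnn' : ∀ S : Finset E, 0 ≤ rd S := fun S => hrd0 ▸ hmono' ∅ S (Finset.empty_subset S)
  have hsub' : ∀ S T : Finset E, rd (S ∪ T) + rd (S ∩ T) ≤ rd S + rd T := by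
    intro S T
    rw [hrd (S ∪ T), hrd (S ∩ T), hrd S, hrd T]
    have h1 : Finset.univ \ (S ∪ T) = (Finset.univ \ S) ∩ (Finset.univ \ T) := by
      ext x
      simp only [Finset.mem_sdiff, Finset.mem_union, Finset.mem_inter, Finset.mem_univ, true_and]
      tauto
    have h2 : Finset.univ \ (S ∩ T) = (Finset.univ \ S) ∪ (Finset.univ \ T) := by
      ext x
      simp only [Finset.mem_sdiff, Finset.mem_union, Finset.mem_inter, Finset.mem_univ, true_and]
      tauto
    have h3 := hsub (Finset.univ \ S) (Finset.univ \ T)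
    have h4 : (∑ x ∈ S ∪ T, α x) + ∑ x ∈ S ∩ T, α x = (∑ x ∈ S, α x) + ∑ x ∈ T, α x :=
      Finset.sum_union_inter
    rw [h1, h2]
    linarith
  refine ⟨⟨hrd0, hnn', hmono', hsub'⟩, ?_, ?_, ?_, ?_⟩
  · rw [hrd]; simp [h0]
  · intro S
    have hsd : Finset.univ \ (Finset.univ \ S) = S := by
      ext x; simp
    rw [hrd (Finset.univ \ S), hrd Finset.univ, hsd, Finset.sdiff_self, h0]
    have h1 : (∑ x ∈ Finset.univ \ S, α x) + ∑ x ∈ S, α x = ∑ x : E, α x :=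
      Finset.sum_sdiff (Finset.subset_univ S)
    linarith
  · intro S T hT
    have e1 : Finset.univ \ ((Finset.univ \ S) \ T) = S ∪ T := by
      ext x
      simp only [Finset.mem_sdiff, Finset.mem_union, Finset.mem_univ, true_and]
      tauto
    have e2 : Finset.univ \ (Finset.univ \ S) = S := by
      ext x; simp
    rw [hrd ((Finset.univ \ S) \ T), hrd (Finset.univ \ S), e1, e2]
    have hsum : ∑ x ∈ (Finset.univ \ S) \ T, α x + ∑ x ∈ T, α x = ∑ x ∈ Finset.univ \ S, α x :=
      Finset.sum_sdiff hT
    linarith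
  · intro S T hT
    have hx : ∀ x, x ∈ T → x ∉ S := fun x h => (Finset.mem_sdiff.mp (hT h)).2
    have e1 : S ∪ ((Finset.univ \ S) \ T) = Finset.univ \ T := by
      ext x
      have := hx x
      simp only [Finset.mem_sdiff, Finset.mem_union, Finset.mem_univ, true_and]
      tauto
    have e2 : Finset.univ \ (Finset.univ \ T) = T := by
      ext x; simp
    rw [e1, hrd (Finset.univ \ T), hrd Finset.univ, e2, Finset.sdiff_self, h0]
    have hsum : ∑ x ∈ Finset.univ \ T, α x + ∑ x ∈ T, α x = ∑ x : E, α x :=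
      Finset.sum_sdiff (Finset.subset_univ T)
    linarith
end

section
/- Let H ≤ G = ∏_{x∈E} Γ_x realize the polymatroid P(H). For S ⊆ E, the kernel K = π_{E\S}(ker(π_S : H → H_S)) realizes the contraction P(H)/S: for every T ⊆ E \ S, |π_T(K)| = |H_{S∪T}| / |H_S|, so log_b |π_T(K)| = r(S∪T) − r(S). -/
/-- the projection of `ker(π_S : H → H_S)` to the remaining
coordinates realizes the contraction `P(H)/S`: for `T` disjoint from `S`,
`|π_T(ker π_S ∩ H)| = |H_{S∪T}| / |H_S|`, i.e. its log is `r(S∪T) − r(S)`. -/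
theorem stmt10 {E : Type} [Fintype E] [DecidableEq E]
    (Γ : E → Type) [∀ x, Group (Γ x)] [∀ x, Fintype (Γ x)]
    (H : Subgroup (∀ x, Γ x)) (b : ℝ) (hb : 1 < b)
    (r : Finset E → ℝ)
    (hr : ∀ S : Finset E, r S = Real.logb b (Nat.card (Subgroup.map (proj Γ S) H)))
    (S T : Finset E) (hST : Disjoint S T) :
    Nat.card (Subgroup.map (proj Γ T) (H ⊓ (proj Γ S).ker)) *
        Nat.card (Subgroup.map (proj Γ S) H) =
      Nat.card (Subgroup.map (proj Γ (S ∪ T)) H) ∧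
    Real.logb b (Nat.card (Subgroup.map (proj Γ T) (H ⊓ (proj Γ S).ker))) =
      r (S ∪ T) - r S := by
  classical
  set G' := Subgroup.map (proj Γ (S ∪ T)) H with hG'
  let f : (∀ x : (S ∪ T : Finset E), Γ x) →* (∀ x : S, Γ x) :=
    Pi.monoidHom fun i => Pi.evalMonoidHom _ (⟨i.1, Finset.mem_union_left T i.2⟩ : (S ∪ T : Finset E))
  let ψ : (∀ x : (S ∪ T : Finset E), Γ x) →* (∀ x : T, Γ x) :=
    Pi.monoidHom fun i => Pi.evalMonoidHom _ (⟨i.1, Finset.mem_union_right S i.2⟩ : (S ∪ T : Finset E))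
  have hf : f.comp (proj Γ (S ∪ T)) = proj Γ S := rfl
  have hψ : ψ.comp (proj Γ (S ∪ T)) = proj Γ T := rfl
  set K' := Subgroup.map (proj Γ (S ∪ T)) (H ⊓ (proj Γ S).ker) with hK'
  have hKmap : Subgroup.map ψ K' = Subgroup.map (proj Γ T) (H ⊓ (proj Γ S).ker) := by
    rw [hK', Subgroup.map_map, hψ]
  -- injectivity of ψ on K'
  have hinj : Function.Injective (ψ.comp K'.subtype) := by
    rw [← MonoidHom.ker_eq_bot_iff, eq_bot_iff]
    rintro ⟨a, ha⟩ h1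
    obtain ⟨h, hh, rfl⟩ := ha
    simp only [MonoidHom.mem_ker, MonoidHom.comp_apply] at h1
    have hS1 : proj Γ S h = 1 := hh.2
    have : proj Γ (S ∪ T) h = 1 := by
      funext i
      rcases Finset.mem_union.mp i.2 with hi | hi
      · exact congrFun hS1 ⟨i.1, hi⟩
      · exact congrFun h1 ⟨i.1, hi⟩
    simpa [Subgroup.mem_bot, Subtype.ext_iff] using this
  have hcardK : Nat.card K' = Nat.card (Subgroup.map (proj Γ T) (H ⊓ (proj Γ S).ker)) := by
    rw [← hKmap]
    have := Nat.card_congr (MonoidHom.ofInjective hinj).toEquiv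
    rw [this]
    congr 1
    rw [MonoidHom.range_comp, Subgroup.subtype_range]
  -- kernel of f restricted to G'
  have hle : K' ≤ G' := Subgroup.map_mono inf_le_left
  have hker : (f.comp G'.subtype).ker = K'.subgroupOf G' := by
    ext ⟨a, ha⟩
    simp only [MonoidHom.mem_ker, MonoidHom.comp_apply, Subgroup.mem_subgroupOf]
    constructor
    · intro h1
      obtain ⟨h, hh, rfl⟩ := ha
      exact ⟨h, ⟨hh, h1⟩, rfl⟩
    · rintro ⟨h, hh, rfl⟩
      exact hh.2
  have hrange : (f.comp G'.subtype).range = Subgroup.map (proj Γ S) H := by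
    rw [MonoidHom.range_comp, Subgroup.subtype_range, hG', Subgroup.map_map, hf]
  have key : Nat.card (Subgroup.map (proj Γ T) (H ⊓ (proj Γ S).ker)) *
      Nat.card (Subgroup.map (proj Γ S) H) = Nat.card G' := by
    rw [← hcardK, ← hrange]
    have h1 := Subgroup.card_eq_card_quotient_mul_card_subgroup (f.comp G'.subtype).ker
    have h2 := Nat.card_congr (QuotientGroup.quotientKerEquivRange (f.comp G'.subtype)).toEquiv
    have h3 : Nat.card ((f.comp G'.subtype).ker) = Nat.card K' := by
      rw [hker]
      exact Nat.card_congr (Subgroup.subgroupOfEquivOfLe hle).toEquiv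
    rw [h1, h2, h3] at *
    ring
  refine ⟨key, ?_⟩
  have pos1 : 0 < Nat.card (Subgroup.map (proj Γ T) (H ⊓ (proj Γ S).ker)) := Nat.card_pos
  have pos2 : 0 < Nat.card (Subgroup.map (proj Γ S) H) := Nat.card_pos
  rw [hr, hr]
  rw [← key]
  push_cast
  rw [Real.logb_mul (by positivity) (by positivity)]
  ring
end

section
/- (Extension lemma.) Let H ≤ G = ∏_{x∈E} Γ_x and S ⊆ E. For an irreducible representation ρ = ⊗_{x∈S} ρ_x of G_S = ∏_{x∈S} Γ_x, let ρ̄ be its extension to G obtained by tensoring with trivial representations on coordinates outside S. Then ρ occurs in ℂ[G_S / H_S] if and only if ρ̄ occurs in ℂ[G/H], where H_S = π_S(H). -/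
/-- A linear map intertwining two representations. -/
def IsEquivariant {k G V W : Type} [CommSemiring k] [Monoid G]
    [AddCommMonoid V] [Module k V] [AddCommMonoid W] [Module k W]
    (ρ : Representation k G V) (σ : Representation k G W) (f : V →ₗ[k] W) : Prop :=
  ∀ g : G, f ∘ₗ ρ g = σ g ∘ₗ f

/-- `ρ` occurs in `σ` if there is a nonzero equivariant map `ρ → σ`. -/
def Occurs {k G V W : Type} [CommSemiring k] [Monoid G]
    [AddCommMonoid V] [Module k V] [AddCommMonoid W] [Module k W]
    (ρ : Representation k G V) (σ : Representation k G W) : Prop :=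
  ∃ f : V →ₗ[k] W, f ≠ 0 ∧ IsEquivariant ρ σ f

/-- Irreducibility of a representation. -/
def IsIrred {k G V : Type} [CommSemiring k] [Monoid G]
    [AddCommMonoid V] [Module k V] (ρ : Representation k G V) : Prop :=
  Nontrivial V ∧
    ∀ p : Submodule k V, (∀ g : G, ∀ v ∈ p, ρ g v ∈ p) → p = ⊥ ∨ p = ⊤

/-! The map `G ⧸ H → G' ⧸ π(H)` induced by a surjection `π : G →* G'` is `π`-equivariant and
surjective, and its fibres are `ker π`-orbits. Pulling functions back along it embeds
`k[G' ⧸ π(H)]` equivariantly into `k[G ⧸ H]`, which turns an intertwiner out of `ρ` into one out of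
`ρ ∘ π`. Conversely, pushing forward along it is equivariant; an intertwiner out of `ρ ∘ π` takes
values in `ker π`-invariant functions, which are constant on the fibres, so in characteristic zero
its pushforward is still nonzero. -/

open Function MonoidAlgebra

section QuotientMap

variable {G G' : Type} [Group G] [Group G'] (π : G →* G') (H : Subgroup G)

def quotientMap : G ⧸ H → G' ⧸ H.map π :=
  Quotient.map' π fun a b hab => by
    rw [QuotientGroup.leftRel_apply] at *
    exact ⟨a⁻¹ * b, hab, by simp⟩

@[simp]
lemma quotientMap_mk (g : G) : quotientMap π H g = (π g : G' ⧸ H.map π) := rfl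

lemma quotientMap_smul (g : G) (x : G ⧸ H) :
    quotientMap π H (g • x) = π g • quotientMap π H x := by
  induction x using QuotientGroup.induction_on with
  | H a => simp only [MulAction.Quotient.smul_mk, quotientMap_mk, smul_eq_mul, map_mul]

lemma quotientMap_surjective {π : G →* G'} (hπ : Surjective π) :
    Surjective (quotientMap π H) :=
  Surjective.of_comp (g := QuotientGroup.mk) (QuotientGroup.mk_surjective.comp hπ)

lemma exists_mem_ker_smul_eq_of_quotientMap_eq {x y : G ⧸ H}
    (hxy : quotientMap π H x = quotientMap π H y) : ∃ n ∈ π.ker, n • x = y := by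
  induction x using QuotientGroup.induction_on with | H g =>
  induction y using QuotientGroup.induction_on with | H g' =>
  obtain ⟨h, hH, hh⟩ := QuotientGroup.eq.mp hxy
  refine ⟨g' * h⁻¹ * g⁻¹, ?_, ?_⟩
  · simp [hh]
  · rw [MulAction.Quotient.smul_mk, QuotientGroup.eq]
    simpa using hH

end QuotientMap

section Equivariance

variable {k G G' U V W : Type} [CommSemiring k] [Monoid G] [Monoid G']
  [AddCommMonoid U] [Module k U] [AddCommMonoid V] [Module k V] [AddCommMonoid W] [Module k W]
  {ρ : Representation k G U} {σ : Representation k G V} {τ : Representation k G W}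

lemma IsEquivariant.comp {f : U →ₗ[k] V} {j : V →ₗ[k] W} (hj : IsEquivariant σ τ j)
    (hf : IsEquivariant ρ σ f) : IsEquivariant ρ τ (j ∘ₗ f) := fun g => by
  rw [LinearMap.comp_assoc, hf, ← LinearMap.comp_assoc, hj, LinearMap.comp_assoc]

lemma isEquivariant_comp_iff {π : G →* G'} (hπ : Surjective π) {ρ : Representation k G' U}
    {σ : Representation k G' V} {f : U →ₗ[k] V} :
    IsEquivariant (ρ.comp π) (σ.comp π) f ↔ IsEquivariant ρ σ f :=
  ⟨fun h => hπ.forall.2 h, fun h g => h (π g)⟩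

end Equivariance

lemma Finsupp.mapDomain_apply_ne_zero {α β M : Type} [AddCommMonoid M] [IsAddTorsionFree M]
    {f : α → β} {x : α →₀ M} {a : α} (ha : x a ≠ 0) (hconst : ∀ b, f b = f a → x b = x a) :
    x.mapDomain f (f a) ≠ 0 := by
  classical
  rw [Finsupp.mapDomain_apply_eq_sum,
    Finset.sum_congr rfl fun b hb => hconst b (Finset.mem_filter.1 hb).2, Finset.sum_const,
    ne_eq, nsmul_eq_zero_iff, not_or]
  exact ⟨ha, Finset.card_ne_zero_of_mem <|
    Finset.mem_filter.2 ⟨Finsupp.mem_support_iff.2 ha, rfl⟩⟩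

section Permutation

variable {k G G' X Y : Type} [CommSemiring k] [Group G] [Group G'] [MulAction G X] [MulAction G' Y]

lemma isEquivariant_mapDomainLinearMap (π : G →* G') {q : X → Y}
    (hq : ∀ (g : G) x, q (g • x) = π g • q x) :
    IsEquivariant (Representation.ofMulAction k G X) ((Representation.ofMulAction k G' Y).comp π)
      (mapDomainLinearMap k k q) := fun g => by
  show mapDomainLinearMap k k q ∘ₗ mapDomainLinearMap k k (g • ·) =
    mapDomainLinearMap k k (π g • ·) ∘ₗ mapDomainLinearMap k k q
  rw [← mapDomainLinearMap_comp, ← mapDomainLinearMap_comp]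
  exact congrArg _ (funext (hq g))

variable (k) in
noncomputable def pullback [Finite X] (q : X → Y) : k[Y] →ₗ[k] k[X] :=
  (coeffLinearEquiv k).symm.toLinearMap ∘ₗ
    (Finsupp.linearEquivFunOnFinite k k X).symm.toLinearMap ∘ₗ LinearMap.funLeft k k q ∘ₗ
    Finsupp.lcoeFun ∘ₗ (coeffLinearEquiv k).toLinearMap

@[simp]
lemma coeff_pullback [Finite X] (q : X → Y) (φ : k[Y]) (x : X) :
    (pullback k q φ).coeff x = φ.coeff (q x) := by
  simp [pullback, LinearMap.funLeft]

lemma pullback_injective [Finite X] {q : X → Y} (hq : Surjective q) :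
    Injective (pullback k q) := fun φ ψ h => by
  ext y
  obtain ⟨x, rfl⟩ := hq y
  simpa using congrArg (fun χ => χ.coeff x) h

lemma isEquivariant_pullback [Finite X] (π : G →* G') {q : X → Y}
    (hq : ∀ (g : G) x, q (g • x) = π g • q x) :
    IsEquivariant ((Representation.ofMulAction k G' Y).comp π) (Representation.ofMulAction k G X)
      (pullback k q) := fun g =>
  LinearMap.ext fun φ => MonoidAlgebra.ext <| Finsupp.ext fun x => by simp [hq]

lemma mapDomainLinearMap_ne_zero [IsAddTorsionFree k] (N : Subgroup G) {q : X → Y}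
    (hq : ∀ x y, q x = q y → ∃ n ∈ N, n • x = y) {φ : k[X]}
    (hφ : ∀ n ∈ N, Representation.ofMulAction k G X n φ = φ) (hφ0 : φ ≠ 0) :
    mapDomainLinearMap k k q φ ≠ 0 := by
  -- The fibres of `q` are `N`-orbits, on which the `N`-invariant `φ` is constant.
  obtain ⟨x, hx⟩ : ∃ x, φ.coeff x ≠ 0 := by
    by_contra! h
    exact hφ0 (MonoidAlgebra.ext (Finsupp.ext h))
  have hconst : ∀ y, q y = q x → φ.coeff y = φ.coeff x := fun y hy => by
    obtain ⟨n, hn, rfl⟩ := hq x y hy.symm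
    simpa using (congrArg (fun ψ => ψ.coeff (n • x)) (hφ n hn)).symm
  intro h
  exact Finsupp.mapDomain_apply_ne_zero hx hconst <| by
    simpa using congrArg (fun ψ => ψ.coeff (q x)) h

end Permutation

theorem occurs_ofMulAction_quotient_map_iff {k G G' V : Type} [CommSemiring k]
    [IsAddTorsionFree k] [Group G] [Group G'] [AddCommMonoid V] [Module k V] {π : G →* G'}
    (hπ : Surjective π) (H : Subgroup G) [Finite (G ⧸ H)] (ρ : Representation k G' V) :
    Occurs ρ (Representation.ofMulAction k G' (G' ⧸ H.map π)) ↔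
      Occurs (ρ.comp π) (Representation.ofMulAction k G (G ⧸ H)) := by
  constructor
  · rintro ⟨f, hf0, hf⟩
    refine ⟨pullback k (quotientMap π H) ∘ₗ f, fun h => hf0 ?_,
      (isEquivariant_pullback π (quotientMap_smul π H)).comp fun g => hf (π g)⟩
    exact LinearMap.ext fun v => pullback_injective (quotientMap_surjective H hπ) <|
      (LinearMap.congr_fun h v).trans (map_zero _).symm
  · rintro ⟨f, hf0, hf⟩
    obtain ⟨v, hv⟩ := DFunLike.ne_iff.1 hf0
    refine ⟨mapDomainLinearMap k k (quotientMap π H) ∘ₗ f, fun h => ?_,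
      (isEquivariant_comp_iff hπ).1 <|
        (isEquivariant_mapDomainLinearMap π (quotientMap_smul π H)).comp hf⟩
    refine mapDomainLinearMap_ne_zero π.ker
      (fun _ _ => exists_mem_ker_smul_eq_of_quotientMap_eq π H) (fun n hn => ?_) hv
      (LinearMap.congr_fun h v)
    rw [← LinearMap.comp_apply, ← hf n]
    simp [(MonoidHom.mem_ker).1 hn]

lemma proj_surjective {E : Type} (Γ : E → Type) [∀ x, Group (Γ x)] (S : Finset E) :
    Surjective (proj Γ S) := by
  classical
  exact fun g => ⟨fun x => if h : x ∈ S then g ⟨x, h⟩ else 1, funext fun i => dif_pos i.2⟩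

theorem stmt13_general {E : Type} [Fintype E]
    (Γ : E → Type) [∀ x, Group (Γ x)] [∀ x, Fintype (Γ x)]
    (H : Subgroup (∀ x, Γ x)) (S : Finset E)
    {V : Type} [AddCommGroup V] [Module ℂ V]
    (ρ : Representation ℂ (∀ x : S, Γ x) V) :
    Occurs ρ
        (Representation.ofMulAction ℂ (∀ x : S, Γ x)
          ((∀ x : S, Γ x) ⧸ Subgroup.map (proj Γ S) H)) ↔
      Occurs (ρ.comp (proj Γ S))
        (Representation.ofMulAction ℂ (∀ x, Γ x) ((∀ x, Γ x) ⧸ H)) :=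
  occurs_ofMulAction_quotient_map_iff (proj_surjective Γ S) H ρ

/-- Extension lemma: an irreducible representation `ρ` of
`G_S` occurs in `ℂ[G_S / H_S]` iff its extension `ρ̄ = ρ ∘ π_S` (trivial on the
coordinates outside `S`) occurs in `ℂ[G/H]`. -/
theorem stmt13 {E : Type} [Fintype E] [DecidableEq E]
    (Γ : E → Type) [∀ x, Group (Γ x)] [∀ x, Fintype (Γ x)]
    (H : Subgroup (∀ x, Γ x)) (S : Finset E)
    {V : Type} [AddCommGroup V] [Module ℂ V] [FiniteDimensional ℂ V]
    (ρ : Representation ℂ (∀ x : S, Γ x) V) (hirr : IsIrred ρ) :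
    Occurs ρ
        (Representation.ofMulAction ℂ (∀ x : S, Γ x)
          ((∀ x : S, Γ x) ⧸ Subgroup.map (proj Γ S) H)) ↔
      Occurs (ρ.comp (proj Γ S))
        (Representation.ofMulAction ℂ (∀ x, Γ x) ((∀ x, Γ x) ⧸ H)) :=
  stmt13_general Γ H S ρ
end

section
/- Let H ≤ G = ∏_{x∈E} Γ_x. An element x ∈ E is a coloop of P(H) (meaning |H| = |H_{E\{x\}}| · |Γ_x|) if and only if every irreducible constituent ρ = ⊗_{y∈E} ρ_y of the permutation representation ℂ[G/H] has ρ_x trivial. -/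
namespace Subgroup

variable {G G' : Type*} [Group G] [Group G']

theorem card_inf_ker_mul_card_map (f : G →* G') (H : Subgroup G) :
    Nat.card (f.ker ⊓ H : Subgroup G) * Nat.card (H.map f) = Nat.card H := by
  rw [← relIndex_ker, ← relIndex_bot_left, ← relIndex_bot_left, relIndex_inf_mul_relIndex,
    bot_inf_eq]

theorem card_eq_card_map_mul_card_ker_iff [Finite G] (f : G →* G') (H : Subgroup G) :
    Nat.card H = Nat.card (H.map f) * Nat.card f.ker ↔ f.ker ≤ H := by
  have : Finite (H.map f) := Finite.of_surjective _ (f.subgroupMap_surjective H)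
  rw [← card_inf_ker_mul_card_map f H, mul_comm, Nat.mul_left_cancel_iff Nat.card_pos]
  refine ⟨fun h => inf_eq_left.1 (eq_of_le_of_card_ge inf_le_left h.ge), fun h => ?_⟩
  rw [inf_eq_left.2 h]

theorem mem_normalCore_iff_forall_smul_eq (H : Subgroup G) (g : G) :
    g ∈ H.normalCore ↔ ∀ q : G ⧸ H, g • q = q := by
  rw [normalCore_eq_ker, MonoidHom.mem_ker, Equiv.Perm.ext_iff]
  rfl

end Subgroup

theorem Representation.ofMulAction_eq_one_iff {k G X : Type*} [CommSemiring k] [Nontrivial k]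
    [Monoid G] [MulAction G X] (g : G) :
    Representation.ofMulAction k G X g = 1 ↔ ∀ x : X, g • x = x := by
  constructor
  · intro h x
    have := congrArg (· (MonoidAlgebra.single x (1 : k))) h
    simpa [MonoidAlgebra.single_left_inj] using this
  · intro h
    ext x
    simp [h]

section Coordinates

variable {E : Type} [Fintype E] [DecidableEq E] {Γ : E → Type} [∀ y, Group (Γ y)]

theorem mem_ker_proj_erase_iff (x : E) (g : ∀ y, Γ y) :
    g ∈ (proj Γ (Finset.univ.erase x)).ker ↔ ∀ y, y ≠ x → g y = 1 := by
  rw [MonoidHom.mem_ker]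
  refine ⟨fun h y hy => congrFun h ⟨y, by simp [hy]⟩, fun h => ?_⟩
  funext ⟨y, hy⟩
  exact h y (Finset.ne_of_mem_erase hy)

theorem card_ker_proj_erase (x : E) :
    Nat.card (proj Γ (Finset.univ.erase x)).ker = Nat.card (Γ x) := by
  have hker : ((proj Γ (Finset.univ.erase x)).ker : Set (∀ y, Γ y)) =
      Set.range (Pi.mulSingle x) := by
    ext g
    rw [SetLike.mem_coe, mem_ker_proj_erase_iff, Set.mem_range]
    refine ⟨fun h => ⟨g x, funext fun y => ?_⟩, ?_⟩
    · by_cases hy : y = x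
      · subst hy; exact Pi.mulSingle_eq_same y (g y)
      · rw [Pi.mulSingle_eq_of_ne hy, h y hy]
    · rintro ⟨a, rfl⟩ y hy
      exact Pi.mulSingle_eq_of_ne hy a
  rw [← SetLike.coe_sort_coe, hker, Nat.card_range_of_injective (Pi.mulSingle_injective x)]

end Coordinates

section Irreducible

variable {k G V W : Type} [CommRing k] [Monoid G] [AddCommGroup V] [Module k V]
  [AddCommGroup W] [Module k W] {ρ : Representation k G V} {σ : Representation k G W}

theorem IsIrred.injective_of_isEquivariant (hρ : IsIrred ρ) {f : V →ₗ[k] W}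
    (hf : IsEquivariant ρ σ f) (hf0 : f ≠ 0) : Function.Injective f := by
  have hker : ∀ g : G, ∀ v ∈ LinearMap.ker f, ρ g v ∈ LinearMap.ker f := by
    intro g v hv
    rw [LinearMap.mem_ker] at hv ⊢
    rw [← LinearMap.comp_apply, hf g, LinearMap.comp_apply, hv, map_zero]
  refine LinearMap.ker_eq_bot.1 ((hρ.2 _ hker).resolve_right fun h => hf0 ?_)
  exact LinearMap.ker_eq_top.1 h

theorem IsIrred.apply_eq_one_of_occurs (hρ : IsIrred ρ) (hocc : Occurs ρ σ) {g : G}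
    (hg : σ g = 1) : ρ g = 1 := by
  obtain ⟨f, hf0, hf⟩ := hocc
  ext v
  apply hρ.injective_of_isEquivariant hf hf0
  rw [← LinearMap.comp_apply, hf g, LinearMap.comp_apply, hg, Module.End.one_apply,
    Module.End.one_apply]

end Irreducible

namespace Subrepresentation

variable {k G V : Type} [Field k] [Group G] [AddCommGroup V] [Module k V]
  {σ : Representation k G V}

theorem isIrred_toRepresentation_of_isAtom {W : Subrepresentation σ} (hW : IsAtom W) :
    IsIrred W.toRepresentation := by
  refine ⟨Submodule.nontrivial_iff_ne_bot.2 fun h => hW.1 (toSubmodule_injective h),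
    fun p hp => ?_⟩
  let U : Subrepresentation σ := ⟨p.map W.toSubmodule.subtype, by
    rintro g _ ⟨u, hu, rfl⟩
    exact ⟨W.toRepresentation g u, hp g u hu, rfl⟩⟩
  have hinj := Submodule.map_injective_of_injective W.toSubmodule.injective_subtype
  rcases hW.le_iff.1 (show U ≤ W by rintro _ ⟨u, -, rfl⟩; exact u.2) with h | h
  · left
    apply hinj
    rw [Submodule.map_bot]
    exact congrArg toSubmodule h
  · right
    apply hinj
    rw [Submodule.map_subtype_top]
    exact congrArg toSubmodule h

theorem occurs_toRepresentation {W : Subrepresentation σ} (hW : W ≠ ⊥) :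
    Occurs W.toRepresentation σ := by
  refine ⟨W.toSubmodule.subtype, fun h => hW ?_, fun g => rfl⟩
  refine toSubmodule_injective ((Submodule.eq_bot_iff _).2 fun w hw => ?_)
  simpa using LinearMap.congr_fun h ⟨w, hw⟩

variable (σ) in
def fixedByConjugates (g : G) : Subrepresentation σ where
  toSubmodule := ⨅ h : G, (LinearMap.ker (σ g - 1)).comap (σ h)
  apply_mem_toSubmodule := by
    intro h v hv
    simp only [Submodule.mem_iInf, Submodule.mem_comap] at hv ⊢
    intro h'
    rw [← Module.End.mul_apply, ← map_mul]
    exact hv _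

theorem mem_fixedByConjugates {g : G} {v : V} :
    v ∈ fixedByConjugates σ g ↔ ∀ h : G, σ g (σ h v) = σ h v := by
  change v ∈ (⨅ h : G, _ : Submodule k V) ↔ _
  simp only [Submodule.mem_iInf, Submodule.mem_comap, LinearMap.mem_ker, LinearMap.sub_apply,
    Module.End.one_apply, sub_eq_zero]

instance [FiniteDimensional k V] : WellFoundedLT (Subrepresentation σ) :=
  StrictMono.wellFoundedLT (f := toSubmodule) fun _ _ h => h

theorem eq_one_of_forall_isAtom [Finite G] [NeZero (Nat.card G : k)] [FiniteDimensional k V]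
    (g : G) (hfix : ∀ W : Subrepresentation σ, IsAtom W → ∀ w ∈ W, σ g w = w) : σ g = 1 := by
  have htop : fixedByConjugates σ g = ⊤ := by
    obtain ⟨q, hq⟩ := exists_isCompl (fixedByConjugates σ g)
    rcases eq_bot_or_exists_atom_le q with rfl | ⟨W, hW, hWq⟩
    · exact codisjoint_bot.1 hq.codisjoint
    · have hWT : W ≤ fixedByConjugates σ g := fun w hw =>
        mem_fixedByConjugates.2 fun h => hfix W hW _ (W.apply_mem_toSubmodule h hw)
      exact absurd (le_bot_iff.1 (hq.disjoint hWT hWq)) hW.1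
  ext v
  have hv : v ∈ fixedByConjugates σ g := htop ▸ trivial
  simpa using mem_fixedByConjugates.1 hv 1

end Subrepresentation

theorem Representation.eq_one_iff_forall_isIrred_occurs {k G M : Type} [Field k] [Group G]
    [Finite G] [NeZero (Nat.card G : k)] [AddCommGroup M] [Module k M] [FiniteDimensional k M]
    (σ : Representation k G M) (g : G) :
    σ g = 1 ↔ ∀ (V : Type) [AddCommGroup V] [Module k V] [FiniteDimensional k V]
      (ρ : Representation k G V), IsIrred ρ → Occurs ρ σ → ρ g = 1 := by
  refine ⟨fun hg V _ _ _ ρ hρ hocc => hρ.apply_eq_one_of_occurs hocc hg, fun h => ?_⟩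
  refine Subrepresentation.eq_one_of_forall_isAtom g fun W hW w hw => ?_
  have hW1 := h W.toSubmodule W.toRepresentation
    (Subrepresentation.isIrred_toRepresentation_of_isAtom hW)
    (Subrepresentation.occurs_toRepresentation hW.1)
  exact congrArg Subtype.val (LinearMap.congr_fun hW1 ⟨w, hw⟩)

/-- `x` is a coloop of `P(H)` (i.e. `|H| = |H_{E∖{x}}|·|Γ_x|`)
iff every irreducible constituent of the permutation representation `ℂ[G/H]`
is trivial on the `x`-th coordinate subgroup. -/
theorem stmt14 {E : Type} [Fintype E] [DecidableEq E]
    (Γ : E → Type) [∀ y, Group (Γ y)] [∀ y, Fintype (Γ y)]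
    (H : Subgroup (∀ y, Γ y)) (x : E) :
    Nat.card H =
        Nat.card (Subgroup.map (proj Γ (Finset.univ.erase x)) H) * Nat.card (Γ x) ↔
      ∀ (V : Type) [AddCommGroup V] [Module ℂ V] [FiniteDimensional ℂ V]
        (ρ : Representation ℂ (∀ y, Γ y) V), IsIrred ρ →
        Occurs ρ (Representation.ofMulAction ℂ (∀ y, Γ y) ((∀ y, Γ y) ⧸ H)) →
        ∀ g : ∀ y, Γ y, (∀ y, y ≠ x → g y = 1) → ρ g = 1 := by
  set σ := Representation.ofMulAction ℂ (∀ y, Γ y) ((∀ y, Γ y) ⧸ H)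
  have hcoloop : Nat.card H =
      Nat.card (Subgroup.map (proj Γ (Finset.univ.erase x)) H) * Nat.card (Γ x) ↔
        ∀ g : ∀ y, Γ y, (∀ y, y ≠ x → g y = 1) → σ g = 1 := by
    rw [← card_ker_proj_erase x, Subgroup.card_eq_card_map_mul_card_ker_iff,
      ← Subgroup.normal_le_normalCore]
    simp only [SetLike.le_def, mem_ker_proj_erase_iff, Subgroup.mem_normalCore_iff_forall_smul_eq,
      Representation.ofMulAction_eq_one_iff, σ]
  simp only [hcoloop, Representation.eq_one_iff_forall_isIrred_occurs]
  exact ⟨fun h V _ _ _ ρ hρ hocc g hg => h g hg V ρ hρ hocc,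
    fun h g hg V _ _ _ ρ hρ hocc => h V ρ hρ hocc g hg⟩
end

section
/- (Greene's theorem for group codes.) Let Γ be a finite group with q = |Γ|, and H ≤ Γ^n a subgroup (a Γ-code). Define the weight enumerator W_H(t) = Σ_{h∈H} t^{w(h)} with w(h) = |{i : h_i ≠ 1}|, and the Tutte function T_P(u,v) = Σ_{S⊆[n]} (u−1)^{r(E)−r(S)} (v−1)^{|S|−r(S)} of the polymatroid P = P(H, q) with rank r(S) = log_q |π_S(H)|. Then for 0 < t < 1: W_H(t) = (1−t)^{r(E)} t^{n−r(E)} T_P((1+(q−1)t)/(1−t), 1/t). -/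
private lemma greene_alg (t Q : ℝ) (ht0 : 0 < t) (ht1 : t < 1) (hQ : 0 < Q)
    (a b m c : ℝ) :
    (1 - t) ^ a * t ^ (m - a) * ((Q * t / (1 - t)) ^ (a - b) * ((1 - t) / t) ^ (c - b))
      = Q ^ (a - b) * (t ^ (m - c) * (1 - t) ^ c) := by
  have h1 : (0:ℝ) < 1 - t := by linarith
  have h2 : (0:ℝ) < Q * t / (1 - t) := by positivity
  have h3 : (0:ℝ) < (1 - t) / t := by positivity
  rw [Real.rpow_def_of_pos h1, Real.rpow_def_of_pos ht0, Real.rpow_def_of_pos h2,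
    Real.rpow_def_of_pos h3, Real.rpow_def_of_pos hQ, Real.rpow_def_of_pos ht0,
    Real.rpow_def_of_pos h1, ← Real.exp_add, ← Real.exp_add, ← Real.exp_add, ← Real.exp_add,
    ← Real.exp_add]
  congr 1
  rw [Real.log_div (by positivity) (ne_of_gt h1), Real.log_mul (ne_of_gt hQ) (ne_of_gt ht0),
    Real.log_div (ne_of_gt h1) (ne_of_gt ht0)]
  ring

private lemma greene_count {n : ℕ} {Γ : Type} [Group Γ] [Fintype Γ]
    (H : Subgroup (Fin n → Γ)) (S : Finset (Fin n)) :
    Nat.card H = Nat.card {h : H // ∀ i ∈ S, (h : Fin n → Γ) i = 1} *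
      Nat.card (Subgroup.map (proj (fun _ : Fin n => Γ) S) H) := by
  classical
  set f : H →* (∀ x : S, Γ) := (proj (fun _ : Fin n => Γ) S).comp H.subtype with hf
  have hrange : f.range = Subgroup.map (proj (fun _ : Fin n => Γ) S) H := by
    rw [hf, MonoidHom.range_comp, Subgroup.range_subtype]
  have h1 : Nat.card H = Nat.card (H ⧸ f.ker) * Nat.card f.ker :=
    Subgroup.card_eq_card_quotient_mul_card_subgroup f.ker
  have h2 : Nat.card (H ⧸ f.ker)
      = Nat.card (Subgroup.map (proj (fun _ : Fin n => Γ) S) H) := by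
    rw [← hrange]
    exact Nat.card_congr (QuotientGroup.quotientKerEquivRange f).toEquiv
  have h3 : Nat.card f.ker = Nat.card {h : H // ∀ i ∈ S, (h : Fin n → Γ) i = 1} := by
    apply Nat.card_congr
    apply Equiv.subtypeEquivRight
    intro x
    simp [hf, MonoidHom.mem_ker, proj, Pi.monoidHom, Pi.evalMonoidHom, funext_iff,
      Subtype.forall]
  rw [h1, h2, h3, mul_comm]

open Classical in
/-- Greene's theorem for group codes: for a subgroup
`H ≤ Γⁿ` with `q = |Γ|`, weight enumerator `W_H(t) = Σ_{h∈H} t^{w(h)}` and the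
Tutte function of the polymatroid `P(H,q)`, for `0 < t < 1`:
`W_H(t) = (1−t)^{r(E)} t^{n−r(E)} T_P((1+(q−1)t)/(1−t), 1/t)`. -/
theorem stmt17 (n : ℕ) (Γ : Type) [Group Γ] [Fintype Γ]
    (H : Subgroup (Fin n → Γ)) (q : ℕ) (hq : q = Nat.card Γ)
    (r : Finset (Fin n) → ℝ)
    (hr : ∀ S : Finset (Fin n),
      r S = Real.logb q (Nat.card (Subgroup.map (proj (fun _ : Fin n => Γ) S) H)))
    (w : (Fin n → Γ) → ℕ)
    (hw : ∀ h : Fin n → Γ, w h = (Finset.univ.filter fun i => h i ≠ 1).card)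
    (t : ℝ) (ht0 : 0 < t) (ht1 : t < 1) :
    (∑ h : H, t ^ w (h : Fin n → Γ)) =
      (1 - t) ^ r Finset.univ * t ^ ((n : ℝ) - r Finset.univ) *
        ∑ S ∈ Finset.univ.powerset,
          ((1 + ((q : ℝ) - 1) * t) / (1 - t) - 1) ^ (r Finset.univ - r S) *
            (1 / t - 1) ^ ((S.card : ℝ) - r S) := by
  classical
  have htpos : (0:ℝ) < 1 - t := by linarith
  have hq1 : 1 ≤ q := by rw [hq]; exact Nat.card_pos
  have hQ0 : (0:ℝ) < (q : ℝ) := by exact_mod_cast Nat.lt_of_lt_of_le Nat.zero_lt_one hq1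
  have hb1 : (1 + ((q : ℝ) - 1) * t) / (1 - t) - 1 = (q : ℝ) * t / (1 - t) := by
    field_simp
    ring
  have hb2 : 1 / t - 1 = (1 - t) / t := by field_simp
  set K : Finset (Fin n) → ℕ :=
    fun S => Nat.card {h : H // ∀ i ∈ S, (h : Fin n → Γ) i = 1} with hK
  -- r(E) - r(S) in the exponent counts the kernel
  have hpow : ∀ S : Finset (Fin n), (q : ℝ) ^ (r Finset.univ - r S) = (K S : ℝ) := by
    intro S
    have hU : Nat.card (Subgroup.map (proj (fun _ : Fin n => Γ) Finset.univ) H)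
        = Nat.card H := by
      have hinj : Function.Injective
          ⇑(proj (fun _ : Fin n => Γ) (Finset.univ : Finset (Fin n))) := by
        intro a b hab
        funext i
        exact congrFun hab ⟨i, Finset.mem_univ i⟩
      exact (Nat.card_congr (Subgroup.equivMapOfInjective H _ hinj).toEquiv).symm
    rcases eq_or_lt_of_le hq1 with h1 | h1
    · -- trivial group
      obtain ⟨hsub, -⟩ := Nat.card_eq_one_iff_unique.mp (hq ▸ h1.symm)
      haveI : Subsingleton (Fin n → Γ) := inferInstance
      have hK1 : K S = 1 := by
        rw [hK]
        refine Nat.card_eq_one_iff_unique.mpr ⟨?_, ⟨⟨1, fun i _ => by simp⟩⟩⟩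
        constructor
        intro a b
        apply Subtype.ext
        apply Subtype.ext
        exact Subsingleton.elim _ _
      have hq1' : (q : ℝ) = 1 := by exact_mod_cast h1.symm
      rw [hq1', Real.one_rpow, hK1, Nat.cast_one]
    · have hq1' : (1:ℝ) < (q : ℝ) := by exact_mod_cast h1
      have hApos : 0 < Nat.card H := Nat.card_pos
      have hBpos : 0 < Nat.card (Subgroup.map (proj (fun _ : Fin n => Γ) S) H) :=
        Nat.card_pos
      rw [hr Finset.univ, hr S, hU, Real.rpow_sub hQ0,
        Real.rpow_logb hQ0 (ne_of_gt hq1') (by exact_mod_cast hApos),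
        Real.rpow_logb hQ0 (ne_of_gt hq1') (by exact_mod_cast hBpos)]
      have hcnt := greene_count H S
      rw [hcnt]
      push_cast
      rw [mul_div_assoc, div_self (by exact_mod_cast ne_of_gt hBpos), mul_one]
  -- rewrite each summand
  have hterm : ∀ S ∈ (Finset.univ : Finset (Fin n)).powerset,
      (1 - t) ^ r Finset.univ * t ^ ((n : ℝ) - r Finset.univ) *
        (((1 + ((q : ℝ) - 1) * t) / (1 - t) - 1) ^ (r Finset.univ - r S) *
          (1 / t - 1) ^ ((S.card : ℝ) - r S))
      = (K S : ℝ) * (t ^ (n - S.card) * (1 - t) ^ S.card) := by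
    intro S _
    have hSn : S.card ≤ n := by
      simpa using Finset.card_le_univ S
    rw [hb1, hb2, greene_alg t (q : ℝ) ht0 ht1 hQ0 (r Finset.univ) (r S) (n : ℝ)
      (S.card : ℝ), hpow S]
    congr 1
    congr 1
    · rw [← Nat.cast_sub hSn, Real.rpow_natCast]
    · rw [Real.rpow_natCast]
  -- main computation
  rw [Finset.mul_sum, Finset.sum_congr rfl hterm]
  have hKsum : ∀ S : Finset (Fin n),
      (K S : ℝ) = ∑ h : H, if ∀ i ∈ S, (h : Fin n → Γ) i = 1 then (1:ℝ) else 0 := by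
    intro S
    rw [Finset.sum_boole]
    simp only [hK, Nat.card_eq_fintype_card, Fintype.card_subtype]
  calc
    ∑ h : H, t ^ w (h : Fin n → Γ)
        = ∑ h : H, ∑ S ∈ (Finset.univ : Finset (Fin n)).powerset,
            (if ∀ i ∈ S, (h : Fin n → Γ) i = 1 then (1:ℝ) else 0) *
              (t ^ (n - S.card) * (1 - t) ^ S.card) := by
        apply Finset.sum_congr rfl
        intro h _
        set C := Finset.univ.filter (fun i => (h : Fin n → Γ) i = 1) with hC
        have hCcard : C.card + w (h : Fin n → Γ) = n := by
          rw [hw]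
          simpa using Finset.card_filter_add_card_filter_not
            (s := (Finset.univ : Finset (Fin n))) (fun i => (h : Fin n → Γ) i = 1)
        have hcond : ∀ S : Finset (Fin n),
            (∀ i ∈ S, (h : Fin n → Γ) i = 1) ↔ S ⊆ C := by
          intro S
          simp [hC, Finset.subset_iff]
        have hstep : ∑ S ∈ (Finset.univ : Finset (Fin n)).powerset,
            (if ∀ i ∈ S, (h : Fin n → Γ) i = 1 then (1:ℝ) else 0) *
              (t ^ (n - S.card) * (1 - t) ^ S.card)
            = ∑ S ∈ C.powerset, t ^ (n - S.card) * (1 - t) ^ S.card := by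
          rw [← Finset.sum_subset (Finset.powerset_mono.mpr C.subset_univ)
            (fun S _ hS => by
              rw [if_neg, zero_mul]
              rw [hcond S]
              exact fun hsub => hS (Finset.mem_powerset.mpr hsub))]
          apply Finset.sum_congr rfl
          intro S hS
          rw [if_pos ((hcond S).mpr (Finset.mem_powerset.mp hS)), one_mul]
        rw [hstep]
        have hsplit : ∀ S ∈ C.powerset,
            t ^ (n - S.card) * (1 - t) ^ S.card
              = t ^ w (h : Fin n → Γ) * ((1 - t) ^ S.card * t ^ (C.card - S.card)) := by
          intro S hS
          have h1 : S.card ≤ C.card := Finset.card_le_card (Finset.mem_powerset.mp hS)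
          have h2 : n - S.card = w (h : Fin n → Γ) + (C.card - S.card) := by omega
          rw [h2, pow_add]; ring
        rw [Finset.sum_congr rfl hsplit, ← Finset.mul_sum]
        have hbin : ∑ S ∈ C.powerset, (1 - t) ^ S.card * t ^ (C.card - S.card) = 1 := by
          calc
            ∑ S ∈ C.powerset, (1 - t) ^ S.card * t ^ (C.card - S.card)
                = ∑ S ∈ C.powerset, (∏ _i ∈ S, (1 - t)) * ∏ _i ∈ C \ S, t := by
              apply Finset.sum_congr rfl
              intro S hS
              rw [Finset.prod_const, Finset.prod_const,
                Finset.card_sdiff_of_subset (Finset.mem_powerset.mp hS)]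
            _ = ∏ _i ∈ C, ((1 - t) + t) := (Finset.prod_add _ _ C).symm
            _ = 1 := by simp
        rw [hbin, mul_one]
    _ = ∑ S ∈ (Finset.univ : Finset (Fin n)).powerset, ∑ h : H,
            (if ∀ i ∈ S, (h : Fin n → Γ) i = 1 then (1:ℝ) else 0) *
              (t ^ (n - S.card) * (1 - t) ^ S.card) := Finset.sum_comm
    _ = ∑ S ∈ (Finset.univ : Finset (Fin n)).powerset,
            (K S : ℝ) * (t ^ (n - S.card) * (1 - t) ^ S.card) := by
        apply Finset.sum_congr rfl
        intro S _
        rw [← Finset.sum_mul, ← hKsum S]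
end

section
/- Let Y_1, …, Y_n be disjoint finite sets acted on by a finite group J such that each action is effectively free (free modulo its kernel), and let Y = Y_1 ∗ ⋯ ∗ Y_n be the simplicial join. Then all eigenvalues of the top-dimensional combinatorial Laplacian Δ_{n−1}(Y/J) = ∂_{n−1}^t ∂_{n−1} + ∂_n ∂_n^t acting on the (n−1)-chains of the quotient simplicial poset Y/J are integers. -/
open Classical Matrix

/-- The top-dimensional faces of the join `Y = Y₁ ∗ ⋯ ∗ Yₙ`. -/
abbrev TopFace (n : ℕ) (Y : Fin n → Type) : Type := ∀ i, Y i

/-- The codimension-one faces of the join `Y = Y₁ ∗ ⋯ ∗ Yₙ`: a coordinate `j`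
that is omitted, together with a vertex from every other `Y i`. -/
abbrev CodimFace (n : ℕ) (Y : Fin n → Type) : Type :=
  Σ j : Fin n, ∀ i : {i : Fin n // i ≠ j}, Y i.1

/-- The coordinatewise action of `J` on the codimension-one faces. -/
instance codimSMul (n : ℕ) (J : Type) [Group J] (Y : Fin n → Type)
    [∀ i, MulAction J (Y i)] : SMul J (CodimFace n Y) :=
  ⟨fun g p => ⟨p.1, fun i => g • p.2 i⟩⟩

instance codimAction (n : ℕ) (J : Type) [Group J] (Y : Fin n → Type)
    [∀ i, MulAction J (Y i)] : MulAction J (CodimFace n Y) where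
  one_smul p := Sigma.ext rfl (heq_of_eq (funext fun i => one_smul J (p.2 i)))
  mul_smul g h p := Sigma.ext rfl (heq_of_eq (funext fun i => mul_smul g h (p.2 i)))

noncomputable instance (n : ℕ) (J : Type) [Group J] (Y : Fin n → Type)
    [∀ i, Fintype (Y i)] [∀ i, MulAction J (Y i)] :
    Fintype (Quotient (MulAction.orbitRel J (TopFace n Y))) :=
  Fintype.ofFinite _

noncomputable instance (n : ℕ) (J : Type) [Group J] (Y : Fin n → Type)
    [∀ i, Fintype (Y i)] [∀ i, MulAction J (Y i)] :
    Fintype (Quotient (MulAction.orbitRel J (CodimFace n Y))) :=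
  Fintype.ofFinite _

/-- The matrix of the top boundary map `∂_{n-1}` of the quotient simplicial
poset `Y/J`, in the orthonormal bases given by the orbits of faces: the orbit
of a facet `y` is sent to `Σ_j (−1)^j` times the orbit of its `j`-th face. -/
noncomputable def bdryMatrix (n : ℕ) (J : Type) [Group J] (Y : Fin n → Type)
    [∀ i, Fintype (Y i)] [∀ i, MulAction J (Y i)] :
    Matrix (Quotient (MulAction.orbitRel J (TopFace n Y)))
      (Quotient (MulAction.orbitRel J (CodimFace n Y))) ℝ :=
  fun qy qf => ∑ j : Fin n,
    if Quotient.mk (MulAction.orbitRel J (CodimFace n Y))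
        (⟨j, fun i => qy.out i.1⟩ : CodimFace n Y) = qf then
      (-1 : ℝ) ^ (j : ℕ)
    else 0

set_option linter.unusedSectionVars false

namespace Stmt18Aux

variable {n : ℕ} {J : Type} [Group J] {Y : Fin n → Type}
  [∀ i, Fintype (Y i)] [∀ i, MulAction J (Y i)]

def res (j : Fin n) (y : TopFace n Y) : CodimFace n Y := ⟨j, fun i => y i.1⟩

lemma res_smul (g : J) (j : Fin n) (y : TopFace n Y) : res j (g • y) = g • res j y := rfl

lemma mk_eq {X : Type} [MulAction J X] {x y : X} :
    Quotient.mk (MulAction.orbitRel J X) x = Quotient.mk _ y ↔ ∃ g : J, g • y = x := by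
  rw [Quotient.eq]
  exact (MulAction.orbitRel_apply).trans MulAction.mem_orbit_iff

noncomputable def phi (j : Fin n) (q : Quotient (MulAction.orbitRel J (TopFace n Y))) :
    Quotient (MulAction.orbitRel J (CodimFace n Y)) :=
  Quotient.mk _ (res j q.out)

lemma phi_mk (j : Fin n) (y : TopFace n Y) :
    phi j (Quotient.mk (MulAction.orbitRel J (TopFace n Y)) y)
      = Quotient.mk _ (res j y) := by
  obtain ⟨g, hg⟩ := mk_eq.mp (Quotient.out_eq (Quotient.mk (MulAction.orbitRel J (TopFace n Y)) y))
  refine mk_eq.mpr ⟨g, ?_⟩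
  rw [← res_smul, hg]

lemma phi_eq_imp {j k : Fin n} {q q' : Quotient (MulAction.orbitRel J (TopFace n Y))}
    (h : phi j q = phi k q') : j = k := by
  obtain ⟨g, hg⟩ := mk_eq.mp h
  have : (g • res k q'.out).1 = (res j q.out).1 := congrArg Sigma.fst hg
  exact this.symm


def Ksub (J : Type) [Group J] {n : ℕ} (Y : Fin n → Type) [∀ i, MulAction J (Y i)]
    (j : Fin n) : Subgroup J where
  carrier := {g | ∀ i, i ≠ j → ∀ a : Y i, g • a = a}
  one_mem' := fun i _ a => one_smul J a
  mul_mem' := by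
    intro g h hg hh i hi a
    rw [mul_smul, hh i hi a, hg i hi a]
  inv_mem' := by
    intro g hg i hi a
    conv_lhs => rw [← hg i hi a]
    rw [inv_smul_smul]

lemma mem_Ksub {j : Fin n} {g : J} :
    g ∈ Ksub J Y j ↔ ∀ i, i ≠ j → ∀ a : Y i, g • a = a := Iff.rfl

variable (heff : ∀ (i : Fin n) (g : J), (∃ y : Y i, g • y = y) → ∀ y : Y i, g • y = y)
include heff

lemma stab_const (j : Fin n) (a b : Y j) :
    MulAction.stabilizer (Ksub J Y j) a = MulAction.stabilizer (Ksub J Y j) b := by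
  ext g
  simp only [MulAction.mem_stabilizer_iff, Subgroup.smul_def]
  constructor
  · intro h; exact heff j (g : J) ⟨a, h⟩ b
  · intro h; exact heff j (g : J) ⟨b, h⟩ a

lemma orbit_card_const (j : Fin n) (a b : Y j) :
    Nat.card (MulAction.orbit (Ksub J Y j) a) = Nat.card (MulAction.orbit (Ksub J Y j) b) := by
  rw [Nat.card_congr (MulAction.orbitEquivQuotientStabilizer (Ksub J Y j) a),
    Nat.card_congr (MulAction.orbitEquivQuotientStabilizer (Ksub J Y j) b),
    stab_const heff j a b]

lemma card_Y_eq (j : Fin n) (y0 : TopFace n Y) :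
    Fintype.card (Y j)
      = Nat.card (Quotient (MulAction.orbitRel (Ksub J Y j) (Y j)))
        * Nat.card (MulAction.orbit (Ksub J Y j) (y0 j)) := by
  classical
  have h1 : (Finset.univ : Finset (Y j)).card
      = ∑ ω : Quotient (MulAction.orbitRel (Ksub J Y j) (Y j)),
          (Finset.univ.filter
            (fun a : Y j => Quotient.mk (MulAction.orbitRel (Ksub J Y j) (Y j)) a = ω)).card :=
    Finset.card_eq_sum_card_fiberwise (fun a _ => Finset.mem_univ _)
  have h2 : ∀ ω : Quotient (MulAction.orbitRel (Ksub J Y j) (Y j)),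
      (Finset.univ.filter
        (fun a : Y j => Quotient.mk (MulAction.orbitRel (Ksub J Y j) (Y j)) a = ω)).card
      = Nat.card (MulAction.orbit (Ksub J Y j) (y0 j)) := by
    intro ω
    rw [← Fintype.card_subtype]
    rw [← Nat.card_eq_fintype_card]
    rw [orbit_card_const heff j (y0 j) ω.out]
    refine Nat.card_congr (Equiv.subtypeEquivRight fun a => ?_)
    constructor
    · intro h
      exact MulAction.mem_orbit_iff.mpr (mk_eq.mp (h.trans (Quotient.out_eq ω).symm))
    · intro h
      obtain ⟨g, hg⟩ := MulAction.mem_orbit_iff.mp h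
      exact (mk_eq.mpr ⟨g, hg⟩).trans (Quotient.out_eq ω)
  rw [← Finset.card_univ, h1, Finset.sum_congr rfl fun ω _ => h2 ω, Finset.sum_const,
    Finset.card_univ, smul_eq_mul]
  simp [Nat.card_eq_fintype_card]

lemma count_pos (j : Fin n) (q : Quotient (MulAction.orbitRel J (TopFace n Y)))
    (y : TopFace n Y)
    (h : phi j q = Quotient.mk (MulAction.orbitRel J (CodimFace n Y)) (res j y)) :
    Nat.card {w : TopFace n Y // Quotient.mk (MulAction.orbitRel J (TopFace n Y)) w = q
        ∧ ∀ i, i ≠ j → w i = y i}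
      = Nat.card (MulAction.orbit (Ksub J Y j) (q.out j)) := by
  classical
  obtain ⟨g, hg⟩ := mk_eq.mp h
  -- hg : g • res j y = res j q.out
  have hg' : (⟨j, fun i => g • y i.1⟩ : CodimFace n Y) = ⟨j, fun i => q.out i.1⟩ := hg
  have hgp : ∀ (i : Fin n) (hi : i ≠ j), g • y i = q.out i := by
    intro i hi
    exact congrFun (eq_of_heq (Sigma.mk.inj_iff.mp hg').2) ⟨i, hi⟩
  refine Nat.card_congr (Equiv.ofBijective (fun w => ⟨g • w.1 j, ?_⟩) ⟨?_, ?_⟩)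
  · -- membership: g • w j ∈ orbit (Ksub J Y j) (q.out j)
    obtain ⟨hwq, hwy⟩ := w.2
    obtain ⟨hh, hhz⟩ := mk_eq.mp (hwq.trans (Quotient.out_eq q).symm)
    have hmem : (g * hh) ∈ Ksub J Y j := by
      intro i hi a
      refine heff i _ ⟨q.out i, ?_⟩ a
      rw [mul_smul]
      have : hh • q.out i = w.1 i := congrFun hhz i
      rw [this, hwy i hi, hgp i hi]
    refine MulAction.mem_orbit_iff.mpr ⟨⟨g * hh, hmem⟩, ?_⟩
    rw [Subgroup.smul_def]
    show (g * hh) • q.out j = g • w.1 j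
    rw [mul_smul]
    congr 1
    exact congrFun hhz j
  · -- injectivity
    rintro ⟨w, hwq, hwy⟩ ⟨w', hwq', hwy'⟩ hww
    have h1 : g • w j = g • w' j := congrArg Subtype.val hww
    have hj : w j = w' j := smul_left_cancel g h1
    refine Subtype.ext (funext fun i => ?_)
    show w i = w' i
    by_cases hi : i = j
    · subst hi; exact hj
    · rw [hwy i hi, hwy' i hi]
  · -- surjectivity
    rintro ⟨a, ha⟩
    obtain ⟨s, hs⟩ := MulAction.mem_orbit_iff.mp ha
    rw [Subgroup.smul_def] at hs
    refine ⟨⟨Function.update y j (g⁻¹ • a), ?_, ?_⟩, ?_⟩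
    · rw [← Quotient.out_eq q, mk_eq]
      refine ⟨g⁻¹ * (s : J), funext fun i => ?_⟩
      by_cases hi : i = j
      · subst hi
        show (g⁻¹ * (s : J)) • q.out i = _
        rw [Function.update_self, mul_smul, hs]
      · show (g⁻¹ * (s : J)) • q.out i = _
        rw [Function.update_of_ne hi, mul_smul, s.2 i hi (q.out i), ← hgp i hi, inv_smul_smul]
    · intro i hi
      exact Function.update_of_ne hi _ y
    · refine Subtype.ext ?_
      show g • Function.update y j (g⁻¹ • a) j = a
      rw [Function.update_self, smul_inv_smul]

lemma count_neg (j : Fin n) (q : Quotient (MulAction.orbitRel J (TopFace n Y)))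
    (y : TopFace n Y)
    (h : phi j q ≠ Quotient.mk (MulAction.orbitRel J (CodimFace n Y)) (res j y)) :
    Nat.card {w : TopFace n Y // Quotient.mk (MulAction.orbitRel J (TopFace n Y)) w = q
        ∧ ∀ i, i ≠ j → w i = y i} = 0 := by
  have : IsEmpty {w : TopFace n Y // Quotient.mk (MulAction.orbitRel J (TopFace n Y)) w = q
      ∧ ∀ i, i ≠ j → w i = y i} := by
    refine ⟨fun w => h ?_⟩
    obtain ⟨hwq, hwy⟩ := w.2
    obtain ⟨hh, hhz⟩ := mk_eq.mp (hwq.trans (Quotient.out_eq q).symm)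
    have hres : res j w.1 = res j y :=
      congrArg (Sigma.mk j) (funext fun i => hwy i.1 i.2)
    refine mk_eq.mpr ⟨hh⁻¹, ?_⟩
    rw [← hres, ← hhz, res_smul, inv_smul_smul]
  simp [Nat.card_of_isEmpty]
noncomputable def Pmat (j : Fin n) :
    Matrix (Quotient (MulAction.orbitRel J (TopFace n Y)))
      (Quotient (MulAction.orbitRel J (TopFace n Y))) ℝ :=
  fun q q' => if phi j q = phi j q' then 1 else 0

noncomputable def Lmat :
    Matrix (Quotient (MulAction.orbitRel J (TopFace n Y))) (TopFace n Y) ℝ :=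
  fun q y => if Quotient.mk (MulAction.orbitRel J (TopFace n Y)) y = q then 1 else 0

noncomputable def Amat (j : Fin n) : Matrix (TopFace n Y) (TopFace n Y) ℝ :=
  fun w y => if ∀ i, i ≠ j → w i = y i then 1 else 0

omit heff in
lemma M_eq : bdryMatrix n J Y * (bdryMatrix n J Y)ᵀ = ∑ j : Fin n, Pmat (J := J) (Y := Y) j := by
  ext q q'
  rw [Matrix.mul_apply, Matrix.sum_apply]
  have hb : ∀ (r : Quotient (MulAction.orbitRel J (TopFace n Y))) qf,
      bdryMatrix n J Y r qf = ∑ j : Fin n, if phi j r = qf then (-1:ℝ)^(j:ℕ) else 0 :=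
    fun r qf => rfl
  simp only [Matrix.transpose_apply, hb]
  have step1 : ∀ qf, (∑ j : Fin n, if phi j q = qf then (-1:ℝ)^(j:ℕ) else 0) *
      (∑ k : Fin n, if phi k q' = qf then (-1:ℝ)^(k:ℕ) else 0)
      = ∑ j : Fin n, ∑ k : Fin n, (if phi j q = qf then (-1:ℝ)^(j:ℕ) else 0) *
        (if phi k q' = qf then (-1:ℝ)^(k:ℕ) else 0) := fun qf => by
    rw [Finset.sum_mul]
    exact Finset.sum_congr rfl fun j _ => Finset.mul_sum _ _ _
  rw [Finset.sum_congr rfl fun qf _ => step1 qf, Finset.sum_comm]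
  refine Finset.sum_congr rfl fun j _ => ?_
  rw [Finset.sum_comm]
  have step2 : ∀ k : Fin n, (∑ qf, (if phi j q = qf then (-1:ℝ)^(j:ℕ) else 0) *
      (if phi k q' = qf then (-1:ℝ)^(k:ℕ) else 0))
      = if phi k q' = phi j q then (-1:ℝ)^(j:ℕ) * (-1:ℝ)^(k:ℕ) else 0 := fun k => by
    rw [Finset.sum_eq_single (phi j q)]
    · rw [if_pos rfl, mul_ite, mul_zero]
    · intro qf _ hqf
      rw [if_neg (fun hh => hqf hh.symm), zero_mul]
    · intro hq; exact absurd (Finset.mem_univ _) hq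
  rw [Finset.sum_congr rfl fun k _ => step2 k, Finset.sum_eq_single j]
  · have hpow : (-1:ℝ)^(j:ℕ) * (-1:ℝ)^(j:ℕ) = 1 := by
      rw [← pow_add]; exact Even.neg_one_pow ⟨(j:ℕ), rfl⟩
    rw [hpow]
    show _ = Pmat (J := J) (Y := Y) j q q'
    simp only [Pmat]
    exact if_congr eq_comm rfl rfl
  · intro k _ hk
    rw [if_neg (fun hc => hk (phi_eq_imp hc))]
  · intro hj; exact absurd (Finset.mem_univ _) hj

lemma L_mul_A (y0 : TopFace n Y) (j : Fin n) :
    Lmat (J:=J) (Y:=Y) * Amat (Y:=Y) j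
      = ((Nat.card (MulAction.orbit (Ksub J Y j) (y0 j)) : ℕ) : ℝ)
          • (Pmat (J:=J) (Y:=Y) j * Lmat (J:=J) (Y:=Y)) := by
  ext q y
  rw [Matrix.mul_apply, Matrix.smul_apply, Matrix.mul_apply, smul_eq_mul]
  have hR : (∑ q', Pmat (J:=J) (Y:=Y) j q q' * Lmat (J:=J) (Y:=Y) q' y)
      = if phi j q = Quotient.mk (MulAction.orbitRel J (CodimFace n Y)) (res j y)
        then (1:ℝ) else 0 := by
    simp only [Pmat, Lmat]
    rw [Finset.sum_eq_single (Quotient.mk (MulAction.orbitRel J (TopFace n Y)) y)]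
    · rw [if_pos rfl, mul_one, phi_mk]
    · intro q'' _ hq''
      rw [if_neg (show ¬(Quotient.mk (MulAction.orbitRel J (TopFace n Y)) y = q'') from
        fun hh => hq'' hh.symm), mul_zero]
    · intro hq; exact absurd (Finset.mem_univ _) hq
  have hL : (∑ w, Lmat (J:=J) (Y:=Y) q w * Amat (Y:=Y) j w y)
      = ((Nat.card {w : TopFace n Y // Quotient.mk (MulAction.orbitRel J (TopFace n Y)) w = q
          ∧ ∀ i, i ≠ j → w i = y i} : ℕ) : ℝ) := by
    have hterm : ∀ w : TopFace n Y, Lmat (J:=J) (Y:=Y) q w * Amat (Y:=Y) j w y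
        = if (Quotient.mk (MulAction.orbitRel J (TopFace n Y)) w = q ∧ ∀ i, i ≠ j → w i = y i)
          then (1:ℝ) else 0 := by
      intro w
      simp only [Lmat, Amat]
      by_cases h1 : Quotient.mk (MulAction.orbitRel J (TopFace n Y)) w = q <;>
        by_cases h2 : ∀ i, i ≠ j → w i = y i <;> simp [h1, h2]
    rw [Finset.sum_congr rfl fun w _ => hterm w, Finset.sum_boole, ← Fintype.card_subtype,
      ← Nat.card_eq_fintype_card]
  rw [hL, hR]
  by_cases h : phi j q = Quotient.mk (MulAction.orbitRel J (CodimFace n Y)) (res j y)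
  · rw [if_pos h, mul_one, count_pos heff j q y h, orbit_card_const heff j (q.out j) (y0 j)]
  · rw [if_neg h, mul_zero, count_neg heff j q y h, Nat.cast_zero]

omit heff in
lemma A_cond (j k : Fin n) (hjk : j ≠ k) :
    Amat (Y:=Y) j * Amat (Y:=Y) k
      = fun w y => if ∀ i, i ≠ j → i ≠ k → w i = y i then (1:ℝ) else 0 := by
  ext w y
  rw [Matrix.mul_apply]
  rw [Finset.sum_eq_single (Function.update w j (y j))]
  · simp only [Amat]
    have hc1 : ∀ i, i ≠ j → w i = Function.update w j (y j) i := fun i hi =>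
      (Function.update_of_ne hi _ _).symm
    rw [if_pos hc1, one_mul]
    refine if_congr ?_ rfl rfl
    constructor
    · intro h i hij hik
      have := h i hik
      rwa [Function.update_of_ne hij] at this
    · intro h i hik
      by_cases hij : i = j
      · subst hij; rw [Function.update_self]
      · rw [Function.update_of_ne hij]; exact h i hij hik
  · intro v _ hv
    simp only [Amat]
    by_cases h1 : ∀ i, i ≠ j → w i = v i
    · by_cases h2 : ∀ i, i ≠ k → v i = y i
      · exfalso
        apply hv
        funext i
        by_cases hij : i = j
        · subst hij; rw [Function.update_self]; exact h2 i hjk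
        · rw [Function.update_of_ne hij]; exact (h1 i hij).symm
      · rw [if_neg h2, mul_zero]
    · rw [if_neg h1, zero_mul]
  · intro hm; exact absurd (Finset.mem_univ _) hm

omit heff in
lemma A_comm (j k : Fin n) :
    Amat (Y:=Y) j * Amat (Y:=Y) k = Amat (Y:=Y) k * Amat (Y:=Y) j := by
  by_cases hjk : j = k
  · subst hjk; rfl
  · rw [A_cond j k hjk, A_cond k j (Ne.symm hjk)]
    funext w y
    exact if_congr ⟨fun h i h1 h2 => h i h2 h1, fun h i h1 h2 => h i h2 h1⟩ rfl rfl

omit heff in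
lemma A_sq (j : Fin n) :
    Amat (Y:=Y) j * Amat (Y:=Y) j = ((Fintype.card (Y j) : ℕ) : ℝ) • Amat (Y:=Y) j := by
  ext w y
  rw [Matrix.mul_apply, Matrix.smul_apply, smul_eq_mul]
  by_cases h : ∀ i, i ≠ j → w i = y i
  · have hterm : ∀ v : TopFace n Y, Amat (Y:=Y) j w v * Amat (Y:=Y) j v y
        = if ∀ i, i ≠ j → w i = v i then (1:ℝ) else 0 := by
      intro v
      simp only [Amat]
      by_cases h1 : ∀ i, i ≠ j → w i = v i
      · have h2 : ∀ i, i ≠ j → v i = y i := fun i hi => (h1 i hi).symm.trans (h i hi)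
        rw [if_pos h1, if_pos h2, mul_one]
      · rw [if_neg h1, zero_mul]
    rw [Finset.sum_congr rfl fun v _ => hterm v, Finset.sum_boole]
    have : Amat (Y:=Y) j w y = 1 := by simp only [Amat]; rw [if_pos h]
    rw [this, mul_one]
    congr 1
    rw [← Fintype.card_subtype]
    refine Fintype.card_congr ⟨fun v => v.1 j,
      fun a => ⟨Function.update w j a, fun i hi => (Function.update_of_ne hi _ _).symm⟩,
      fun v => ?_, fun a => Function.update_self j a w⟩
    refine Subtype.ext (funext fun i => ?_)
    show Function.update w j (v.1 j) i = v.1 i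
    by_cases hij : i = j
    · subst hij; rw [Function.update_self]
    · rw [Function.update_of_ne hij]; exact v.2 i hij
  · have hterm : ∀ v : TopFace n Y, Amat (Y:=Y) j w v * Amat (Y:=Y) j v y = 0 := by
      intro v
      simp only [Amat]
      by_cases h1 : ∀ i, i ≠ j → w i = v i
      · rw [if_neg (fun h2 : ∀ i, i ≠ j → v i = y i =>
          h (fun i hi => (h1 i hi).trans (h2 i hi))), mul_zero]
      · rw [if_neg h1, zero_mul]
    rw [Finset.sum_congr rfl fun v _ => hterm v, Finset.sum_const_zero]
    have : Amat (Y:=Y) j w y = 0 := by simp only [Amat]; rw [if_neg h]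
    rw [this, mul_zero]

omit heff in
lemma L_cancel {X X' : Matrix (Quotient (MulAction.orbitRel J (TopFace n Y)))
    (Quotient (MulAction.orbitRel J (TopFace n Y))) ℝ}
    (h : X * Lmat (J:=J) (Y:=Y) = X' * Lmat (J:=J) (Y:=Y)) : X = X' := by
  have key : ∀ (Z : Matrix (Quotient (MulAction.orbitRel J (TopFace n Y)))
      (Quotient (MulAction.orbitRel J (TopFace n Y))) ℝ) q q',
      (Z * (Lmat (J:=J) (Y:=Y) * (Lmat (J:=J) (Y:=Y))ᵀ)) q q'
        = Z q q' * ((Nat.card {y : TopFace n Y //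
            Quotient.mk (MulAction.orbitRel J (TopFace n Y)) y = q'} : ℕ) : ℝ) := by
    intro Z q q'
    rw [Matrix.mul_apply, Finset.sum_eq_single q']
    · congr 1
      rw [Matrix.mul_apply]
      have hterm : ∀ y : TopFace n Y, Lmat (J:=J) (Y:=Y) q' y * (Lmat (J:=J) (Y:=Y))ᵀ y q'
          = if Quotient.mk (MulAction.orbitRel J (TopFace n Y)) y = q' then (1:ℝ) else 0 := by
        intro y
        rw [Matrix.transpose_apply]
        simp only [Lmat]
        by_cases hy : Quotient.mk (MulAction.orbitRel J (TopFace n Y)) y = q' <;> simp [hy]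
      rw [Finset.sum_congr rfl fun y _ => hterm y, Finset.sum_boole, ← Fintype.card_subtype,
        ← Nat.card_eq_fintype_card]
    · intro r _ hr
      have hz : (Lmat (J:=J) (Y:=Y) * (Lmat (J:=J) (Y:=Y))ᵀ) r q' = 0 := by
        rw [Matrix.mul_apply]
        refine Finset.sum_eq_zero fun y _ => ?_
        rw [Matrix.transpose_apply]
        simp only [Lmat]
        by_cases h1 : Quotient.mk (MulAction.orbitRel J (TopFace n Y)) y = r
        · rw [if_neg (fun h2 : Quotient.mk (MulAction.orbitRel J (TopFace n Y)) y = q' =>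
            hr (h1.symm.trans h2)), mul_zero]
        · rw [if_neg h1, zero_mul]
      rw [hz, mul_zero]
    · intro hq'; exact absurd (Finset.mem_univ _) hq'
  have hpos : ∀ q' : Quotient (MulAction.orbitRel J (TopFace n Y)),
      ((Nat.card {y : TopFace n Y //
        Quotient.mk (MulAction.orbitRel J (TopFace n Y)) y = q'} : ℕ) : ℝ) ≠ 0 := by
    intro q'
    have hne : Nonempty {y : TopFace n Y //
        Quotient.mk (MulAction.orbitRel J (TopFace n Y)) y = q'} :=
      ⟨⟨q'.out, Quotient.out_eq q'⟩⟩
    exact Nat.cast_ne_zero.mpr Nat.card_pos.ne'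
  have h3 : X * (Lmat (J:=J) (Y:=Y) * (Lmat (J:=J) (Y:=Y))ᵀ)
      = X' * (Lmat (J:=J) (Y:=Y) * (Lmat (J:=J) (Y:=Y))ᵀ) := by
    rw [← Matrix.mul_assoc, h, Matrix.mul_assoc]
  ext q q'
  have h4 := congrArg (fun Z => Z q q') h3
  simp only [key X q q', key X' q q'] at h4
  exact mul_right_cancel₀ (hpos q') h4

lemma P_mul_L (y0 : TopFace n Y) (j : Fin n) :
    Pmat (J:=J) (Y:=Y) j * Lmat (J:=J) (Y:=Y)
      = ((Nat.card (MulAction.orbit (Ksub J Y j) (y0 j)) : ℕ) : ℝ)⁻¹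
          • (Lmat (J:=J) (Y:=Y) * Amat (Y:=Y) j) := by
  have hne : Nonempty (MulAction.orbit (Ksub J Y j) (y0 j)) :=
    ⟨⟨y0 j, MulAction.mem_orbit_self _⟩⟩
  have hd : ((Nat.card (MulAction.orbit (Ksub J Y j) (y0 j)) : ℕ) : ℝ) ≠ 0 :=
    Nat.cast_ne_zero.mpr Nat.card_pos.ne'
  rw [L_mul_A heff y0 j, smul_smul, inv_mul_cancel₀ hd, one_smul]

lemma PP_L (y0 : TopFace n Y) (a b : Fin n) :
    (Pmat (J:=J) (Y:=Y) a * Pmat (J:=J) (Y:=Y) b) * Lmat (J:=J) (Y:=Y)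
      = (((Nat.card (MulAction.orbit (Ksub J Y b) (y0 b)) : ℕ) : ℝ)⁻¹
          * ((Nat.card (MulAction.orbit (Ksub J Y a) (y0 a)) : ℕ) : ℝ)⁻¹)
          • (Lmat (J:=J) (Y:=Y) * Amat (Y:=Y) a * Amat (Y:=Y) b) := by
  rw [Matrix.mul_assoc, P_mul_L heff y0 b, Matrix.mul_smul, ← Matrix.mul_assoc,
    P_mul_L heff y0 a, Matrix.smul_mul, smul_smul]

lemma P_comm (y0 : TopFace n Y) (j k : Fin n) :
    Pmat (J:=J) (Y:=Y) j * Pmat (J:=J) (Y:=Y) k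
      = Pmat (J:=J) (Y:=Y) k * Pmat (J:=J) (Y:=Y) j := by
  apply L_cancel (J:=J) (Y:=Y)
  rw [PP_L heff y0 j k, PP_L heff y0 k j, mul_comm, Matrix.mul_assoc, A_comm j k,
    ← Matrix.mul_assoc]

lemma P_sq (y0 : TopFace n Y) (j : Fin n) :
    Pmat (J:=J) (Y:=Y) j * Pmat (J:=J) (Y:=Y) j
      = ((Nat.card (Quotient (MulAction.orbitRel (Ksub J Y j) (Y j))) : ℕ) : ℝ)
          • Pmat (J:=J) (Y:=Y) j := by
  have hne : Nonempty (MulAction.orbit (Ksub J Y j) (y0 j)) :=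
    ⟨⟨y0 j, MulAction.mem_orbit_self _⟩⟩
  have hd : ((Nat.card (MulAction.orbit (Ksub J Y j) (y0 j)) : ℕ) : ℝ) ≠ 0 :=
    Nat.cast_ne_zero.mpr Nat.card_pos.ne'
  apply L_cancel (J:=J) (Y:=Y)
  rw [PP_L heff y0 j j, Matrix.mul_assoc, A_sq j, Matrix.mul_smul, smul_smul,
    Matrix.smul_mul, P_mul_L heff y0 j, smul_smul]
  congr 1
  rw [card_Y_eq heff j y0, Nat.cast_mul]
  generalize hgen : ((Nat.card (MulAction.orbit (Ksub J Y j) (y0 j)) : ℕ) : ℝ) = dR at hd ⊢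
  have h1 : dR⁻¹ * dR = 1 := inv_mul_cancel₀ hd
  linear_combination ((Nat.card (Quotient (MulAction.orbitRel (↥(Ksub J Y j)) (Y j))) : ℝ)
    * dR⁻¹) * h1
omit heff in
lemma prod_lemma {A : Type*} [CommRing A] {ι : Type*} [DecidableEq ι] (p c : ι → A) :
    ∀ T : Finset ι, (∀ j ∈ T, p j * p j = c j * p j) →
      ∏ S ∈ T.powerset, ((∑ j ∈ T, p j) - ∑ j ∈ S, c j) = 0 := by
  intro T
  induction T using Finset.induction_on with
  | empty => intro _; simp
  | @insert k T hk ih =>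
    intro hp
    have hpk := hp k (Finset.mem_insert_self k T)
    have hdis : Disjoint T.powerset (T.powerset.image (insert k)) := by
      rw [Finset.disjoint_left]
      intro S hS hS'
      obtain ⟨S', hS', rfl⟩ := Finset.mem_image.mp hS'
      exact hk (Finset.mem_powerset.mp hS (Finset.mem_insert_self k S'))
    have hinj : ∀ x ∈ T.powerset, ∀ y ∈ T.powerset, insert k x = insert k y → x = y := by
      intro x hx y hy hxy
      have hkx : k ∉ x := fun hh => hk (Finset.mem_powerset.mp hx hh)
      have hky : k ∉ y := fun hh => hk (Finset.mem_powerset.mp hy hh)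
      rw [← Finset.erase_insert hkx, ← Finset.erase_insert hky, hxy]
    rw [Finset.powerset_insert, Finset.prod_union hdis, Finset.prod_image hinj]
    have hsum : ∑ j ∈ insert k T, p j = p k + ∑ j ∈ T, p j := Finset.sum_insert hk
    have hstep : ∀ S ∈ T.powerset,
        ((∑ j ∈ insert k T, p j) - ∑ j ∈ S, c j)
          * ((∑ j ∈ insert k T, p j) - ∑ j ∈ insert k S, c j)
        = ((∑ j ∈ T, p j) - ∑ j ∈ S, c j)
          * (((∑ j ∈ T, p j) - ∑ j ∈ S, c j) + 2 * p k - c k) := by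
      intro S hS
      have hkS : k ∉ S := fun hh => hk (Finset.mem_powerset.mp hS hh)
      rw [hsum, Finset.sum_insert hkS]
      linear_combination hpk
    rw [← Finset.prod_mul_distrib, Finset.prod_congr rfl hstep, Finset.prod_mul_distrib,
      ih (fun j hj => hp j (Finset.mem_insert_of_mem hj)), zero_mul]
omit heff in
lemma eigen_int {O : Type} [Fintype O] [DecidableEq O] {N : ℕ}
    (P : Fin N → Matrix O O ℝ) (c : Fin N → ℕ)
    (hcomm : ∀ j k, P j * P k = P k * P j)
    (hsq : ∀ j, P j * P j = ((c j : ℕ) : ℝ) • P j)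
    (v : O → ℝ) (hv0 : v ≠ 0) (lam : ℝ)
    (hv : (∑ j, P j).mulVec v = lam • v) :
    ∃ m : ℤ, lam = (m : ℝ) := by
  classical
  have hcomm' : ∀ a ∈ Set.range P, ∀ b ∈ Set.range P, a * b = b * a := by
    rintro _ ⟨j, rfl⟩ _ ⟨k, rfl⟩
    exact hcomm j k
  letI : CommRing ↥(Algebra.adjoin ℝ (Set.range P)) := Algebra.adjoinCommRingOfComm ℝ hcomm'
  let p' : Fin N → ↥(Algebra.adjoin ℝ (Set.range P)) :=
    fun j => ⟨P j, Algebra.subset_adjoin ⟨j, rfl⟩⟩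
  let c' : Fin N → ↥(Algebra.adjoin ℝ (Set.range P)) := fun j => ((c j : ℕ) : ℝ) • 1
  let valM : ↥(Algebra.adjoin ℝ (Set.range P)) →* Matrix O O ℝ :=
    { toFun := Subtype.val, map_one' := rfl, map_mul' := fun _ _ => rfl }
  let valA : ↥(Algebra.adjoin ℝ (Set.range P)) →+ Matrix O O ℝ :=
    { toFun := Subtype.val, map_zero' := rfl, map_add' := fun _ _ => rfl }
  have hp' : ∀ j ∈ (Finset.univ : Finset (Fin N)), p' j * p' j = c' j * p' j := by
    intro j _
    refine Subtype.ext ?_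
    have h1 : ((p' j * p' j : ↥(Algebra.adjoin ℝ (Set.range P))) : Matrix O O ℝ)
        = P j * P j := rfl
    have h2 : ((c' j * p' j : ↥(Algebra.adjoin ℝ (Set.range P))) : Matrix O O ℝ)
        = (((c j : ℕ) : ℝ) • (1 : Matrix O O ℝ)) * P j := rfl
    rw [h1, h2, Matrix.smul_mul, Matrix.one_mul]
    exact hsq j
  have h0 := prod_lemma p' c' Finset.univ hp'
  -- coercion of each factor
  have hcoe : ∀ S : Finset (Fin N),
      (((∑ j, p' j) - ∑ j ∈ S, c' j : ↥(Algebra.adjoin ℝ (Set.range P))) : Matrix O O ℝ)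
        = (∑ j, P j) - (∑ j ∈ S, ((c j : ℕ) : ℝ)) • (1 : Matrix O O ℝ) := by
    intro S
    have hsub : ∀ (x y : ↥(Algebra.adjoin ℝ (Set.range P))),
        ((x - y : ↥(Algebra.adjoin ℝ (Set.range P))) : Matrix O O ℝ)
          = (x : Matrix O O ℝ) - (y : Matrix O O ℝ) := fun _ _ => rfl
    rw [hsub]
    congr 1
    · exact map_sum valA p' Finset.univ
    · have := map_sum valA c' S
      rw [show valA (∑ j ∈ S, c' j) = ((∑ j ∈ S, c' j : ↥(Algebra.adjoin ℝ (Set.range P)))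
          : Matrix O O ℝ) from rfl] at this
      rw [this, Finset.sum_smul]
      exact Finset.sum_congr rfl fun j _ => rfl
  -- list version of annihilation applied to v
  have keyL : ∀ l : List (Finset (Fin N)),
      ((l.map fun S => (∑ j, P j) - (∑ j ∈ S, ((c j : ℕ) : ℝ)) • (1 : Matrix O O ℝ)).prod).mulVec v
        = ((l.map fun S => lam - ∑ j ∈ S, ((c j : ℕ) : ℝ)).prod) • v := by
    intro l
    induction l with
    | nil => simp [Matrix.one_mulVec]
    | cons S l ih =>
      rw [List.map_cons, List.map_cons, List.prod_cons, List.prod_cons,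
        ← Matrix.mulVec_mulVec, ih, Matrix.mulVec_smul, Matrix.sub_mulVec, hv,
        Matrix.smul_mulVec, Matrix.one_mulVec, ← sub_smul, smul_smul, mul_comm]
  -- push h0 to the matrix level using the list of the powerset
  have h1 : ((Finset.univ : Finset (Fin N)).powerset.toList.map
      (fun S => (∑ j, P j) - (∑ j ∈ S, ((c j : ℕ) : ℝ)) • (1 : Matrix O O ℝ))).prod = 0 := by
    have e1 : ((Finset.univ : Finset (Fin N)).powerset.toList.map
        (fun S => (∑ j, P j) - (∑ j ∈ S, ((c j : ℕ) : ℝ)) • (1 : Matrix O O ℝ)))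
        = List.map valM ((Finset.univ : Finset (Fin N)).powerset.toList.map
            (fun S => (∑ j, p' j) - ∑ j ∈ S, c' j)) := by
      rw [List.map_map]
      exact List.map_congr_left fun S _ => (hcoe S).symm
    rw [e1, List.prod_hom _ valM, Finset.prod_map_toList, h0]
    rfl
  have h3 := keyL (Finset.univ : Finset (Fin N)).powerset.toList
  rw [h1, Matrix.zero_mulVec] at h3
  have h4 : (((Finset.univ : Finset (Fin N)).powerset.toList.map
      (fun S => lam - ∑ j ∈ S, ((c j : ℕ) : ℝ))).prod) = 0 :=
    (smul_eq_zero.mp h3.symm).resolve_right hv0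
  have h5 : (0:ℝ) ∈ ((Finset.univ : Finset (Fin N)).powerset.toList.map
      (fun S => lam - ∑ j ∈ S, ((c j : ℕ) : ℝ))) := by
    rw [← List.prod_eq_zero_iff]
    exact h4
  obtain ⟨S, _, hS⟩ := List.mem_map.mp h5
  refine ⟨∑ j ∈ S, (c j : ℤ), ?_⟩
  have hlamS : lam = ∑ j ∈ S, ((c j : ℕ) : ℝ) := by linarith [sub_eq_zero.mp hS]
  rw [hlamS]
  push_cast
  rfl
end Stmt18Aux

/-- if a finite group `J` acts effectively freely on each of the
finite vertex sets `Y₁, …, Yₙ`, then every eigenvalue of the top-dimensional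
combinatorial Laplacian `Δ_{n−1}(Y/J) = ∂ ∂ᵗ` (here `∂ₙ = 0` as `Y` is
`(n−1)`-dimensional) of the quotient simplicial poset `Y/J` is an integer. -/
theorem stmt18 (n : ℕ) (J : Type) [Group J] [Fintype J] (Y : Fin n → Type)
    [∀ i, Fintype (Y i)] [∀ i, MulAction J (Y i)]
    (heff : ∀ (i : Fin n) (g : J), (∃ y : Y i, g • y = y) → ∀ y : Y i, g • y = y)
    (lam : ℝ)
    (hlam : ∃ v : Quotient (MulAction.orbitRel J (TopFace n Y)) → ℝ, v ≠ 0 ∧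
      (bdryMatrix n J Y * (bdryMatrix n J Y)ᵀ).mulVec v = lam • v) :
    ∃ m : ℤ, lam = (m : ℝ) := by
  classical
  obtain ⟨v, hv0, hv⟩ := hlam
  by_cases hY : ∀ i, Nonempty (Y i)
  · have y0 : TopFace n Y := fun i => (hY i).some
    rw [Stmt18Aux.M_eq] at hv
    exact Stmt18Aux.eigen_int (fun j => Stmt18Aux.Pmat (J:=J) (Y:=Y) j)
      (fun j => Nat.card (Quotient (MulAction.orbitRel (↥(Stmt18Aux.Ksub J Y j)) (Y j))))
      (fun j k => Stmt18Aux.P_comm heff y0 j k)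
      (fun j => Stmt18Aux.P_sq heff y0 j)
      v hv0 lam hv
  · obtain ⟨i, hi⟩ := not_forall.mp hY
    haveI : IsEmpty (Y i) := not_nonempty_iff.mp hi
    have hempty : IsEmpty (Quotient (MulAction.orbitRel J (TopFace n Y))) :=
      ⟨fun q => IsEmpty.false (q.out i)⟩
    exact absurd (funext fun q => (hempty.false q).elim) hv0
end
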